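/- arXiv:1004.0613 — 5 statements merged into one kernel-verified Lean document; each statement's English description precedes it below -/
import Mathlib

section
/- Let n ≥ 4 be even and let Q be the quiver of type D̃_n with vertex set {0,1,…,n} and arrows n→n−2, (n−1)→n−2, i→i−1 for 3 ≤ i ≤ n−2, 2→1 and 2→0. Let δ ∈ ℤ^{n+1} have coordinates δ_0 = δ_1 = δ_{n−1} = δ_n = 1 and δ_i = 2 for 2 ≤ i ≤ n−2, and let c be the Coxeter transformation of Q. Then c^{n−2}(x) = x − ⟨x,δ⟩δ for all x ∈ ℤ^{n+1}; moreover n−2 is the least positive integer b such that c^b(x) − x ∈ ℤδ for every x ∈ ℤ^{n+1}. -/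
/-- The Euler form of the quiver on `Fin N` whose number of arrows from `s` to `t` is
`mult s t` : `⟨a,b⟩ = ∑_v a_v * b_v − ∑_{arrows s→t} a_t * b_s`. -/
def eulerForm (N : ℕ) (mult : Fin N → Fin N → ℕ) (a b : Fin N → ℤ) : ℤ :=
  (∑ v, a v * b v) - ∑ s, ∑ t, (mult s t : ℤ) * (a t * b s)

/-- Arrow multiplicities of the quiver of type D̃_n on vertices `{0,…,n}` with arrows
`n → n−2`, `(n−1) → n−2`, `i → i−1` for `3 ≤ i ≤ n−2`, `2 → 1` and `2 → 0`. -/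
def multDtilde (n : ℕ) (s t : Fin (n+1)) : ℕ :=
  if (s.val = n ∧ t.val = n - 2) ∨ (s.val = n - 1 ∧ t.val = n - 2) ∨
     (3 ≤ s.val ∧ s.val ≤ n - 2 ∧ t.val + 1 = s.val) ∨
     (s.val = 2 ∧ t.val = 1) ∨ (s.val = 2 ∧ t.val = 0) then 1 else 0

/-- The radical vector δ of D̃_n : coordinates 1 at `0, 1, n−1, n` and 2 at `2,…,n−2`. -/
def deltaDtilde (n : ℕ) (v : Fin (n+1)) : ℤ :=
  if v.val = 0 ∨ v.val = 1 ∨ v.val = n - 1 ∨ v.val = n then 1 else 2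

open Finset

namespace S5

def fv (n i : ℕ) : Fin (n+1) := ⟨i % (n+1), Nat.mod_lt _ n.succ_pos⟩

lemma fv_val {n i : ℕ} (h : i ≤ n) : (fv n i).val = i := Nat.mod_eq_of_lt (by omega)

lemma fv_eq {n : ℕ} (v : Fin (n+1)) : fv n v.val = v :=
  Fin.ext (fv_val (by omega))

lemma sum_if_eq (n c : ℕ) (hc : c ≤ n) (g : Fin (n+1) → ℤ) :
    (∑ t : Fin (n+1), if t.val = c then g t else 0) = g (fv n c) := by
  rw [Finset.sum_eq_single (fv n c)]
  · rw [if_pos (fv_val hc)]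
  · intro b _ hb
    rw [if_neg]
    intro h; exact hb (Fin.ext (by rw [fv_val hc]; exact h))
  · intro h; exact absurd (Finset.mem_univ _) h

def outO (n : ℕ) (x : Fin (n+1) → ℤ) (i : ℕ) : ℤ :=
  if i ≤ 1 then 0 else if i = 2 then x (fv n 0) + x (fv n 1)
  else if i ≤ n - 2 then x (fv n (i-1)) else x (fv n (n-2))

def inI (n : ℕ) (y : Fin (n+1) → ℤ) (i : ℕ) : ℤ :=
  if i ≤ 1 then y (fv n 2) else if i ≤ n-3 then y (fv n (i+1))
  else if i = n-2 then y (fv n (n-1)) + y (fv n n) else 0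

lemma out_sum (n : ℕ) (hn : 4 ≤ n) (x : Fin (n+1) → ℤ) (s : Fin (n+1)) :
    ∑ t, (multDtilde n s t : ℤ) * x t = outO n x s.val := by
  have hs : s.val ≤ n := by omega
  unfold outO
  rcases (show s.val ≤ 1 ∨ s.val = 2 ∨ (3 ≤ s.val ∧ s.val ≤ n - 2) ∨ s.val = n - 1 ∨ s.val = n
    from by omega) with h | h | h | h | h
  · rw [if_pos h, Finset.sum_eq_zero]
    intro t _
    unfold multDtilde
    rw [if_neg (by omega)]
    simp
  · rw [if_neg (by omega), if_pos h]
    have : ∀ t : Fin (n+1), (multDtilde n s t : ℤ) * x t =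
        (if t.val = 0 then x t else 0) + (if t.val = 1 then x t else 0) := by
      intro t
      unfold multDtilde
      rcases (show t.val = 0 ∨ t.val = 1 ∨ (2 ≤ t.val) from by omega) with h' | h' | h'
      · rw [if_pos (by omega), if_pos h', if_neg (by omega)]; simp
      · rw [if_pos (by omega), if_neg (by omega), if_pos h']; simp
      · rw [if_neg (by omega), if_neg (by omega), if_neg (by omega)]; simp
    rw [Finset.sum_congr rfl fun t _ => this t, Finset.sum_add_distrib,
      sum_if_eq n 0 (by omega), sum_if_eq n 1 (by omega)]
  · rw [if_neg (by omega), if_neg (by omega), if_pos (by omega)]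
    have : ∀ t : Fin (n+1), (multDtilde n s t : ℤ) * x t =
        (if t.val = s.val - 1 then x t else 0) := by
      intro t
      unfold multDtilde
      rcases eq_or_ne t.val (s.val - 1) with h' | h'
      · rw [if_pos (by omega), if_pos h']; simp
      · rw [if_neg (by omega), if_neg h']; simp
    rw [Finset.sum_congr rfl fun t _ => this t, sum_if_eq n (s.val - 1) (by omega)]
  · rw [if_neg (by omega), if_neg (by omega), if_neg (by omega)]
    have : ∀ t : Fin (n+1), (multDtilde n s t : ℤ) * x t =
        (if t.val = n - 2 then x t else 0) := by
      intro t
      unfold multDtilde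
      rcases eq_or_ne t.val (n - 2) with h' | h'
      · rw [if_pos (by omega), if_pos h']; simp
      · rw [if_neg (by omega), if_neg h']; simp
    rw [Finset.sum_congr rfl fun t _ => this t, sum_if_eq n (n-2) (by omega)]
  · rw [if_neg (by omega), if_neg (by omega), if_neg (by omega)]
    have : ∀ t : Fin (n+1), (multDtilde n s t : ℤ) * x t =
        (if t.val = n - 2 then x t else 0) := by
      intro t
      unfold multDtilde
      rcases eq_or_ne t.val (n - 2) with h' | h'
      · rw [if_pos (by omega), if_pos h']; simp
      · rw [if_neg (by omega), if_neg h']; simp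
    rw [Finset.sum_congr rfl fun t _ => this t, sum_if_eq n (n-2) (by omega)]

lemma in_sum (n : ℕ) (hn : 4 ≤ n) (y : Fin (n+1) → ℤ) (t : Fin (n+1)) :
    ∑ s, (multDtilde n s t : ℤ) * y s = inI n y t.val := by
  have ht : t.val ≤ n := by omega
  unfold inI
  rcases (show t.val ≤ 1 ∨ (2 ≤ t.val ∧ t.val ≤ n - 3) ∨ t.val = n - 2 ∨ (n - 1 ≤ t.val)
    from by omega) with h | h | h | h
  · rw [if_pos h]
    have : ∀ s : Fin (n+1), (multDtilde n s t : ℤ) * y s =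
        (if s.val = 2 then y s else 0) := by
      intro s
      unfold multDtilde
      rcases eq_or_ne s.val 2 with h' | h'
      · rw [if_pos (by omega), if_pos h']; simp
      · rw [if_neg (by omega), if_neg h']; simp
    rw [Finset.sum_congr rfl fun s _ => this s, sum_if_eq n 2 (by omega)]
  · rw [if_neg (by omega), if_pos (by omega)]
    have : ∀ s : Fin (n+1), (multDtilde n s t : ℤ) * y s =
        (if s.val = t.val + 1 then y s else 0) := by
      intro s
      unfold multDtilde
      rcases eq_or_ne s.val (t.val + 1) with h' | h'
      · rw [if_pos (by omega), if_pos h']; simp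
      · rw [if_neg (by omega), if_neg h']; simp
    rw [Finset.sum_congr rfl fun s _ => this s, sum_if_eq n (t.val + 1) (by omega)]
  · rw [if_neg (by omega), if_neg (by omega), if_pos h]
    have : ∀ s : Fin (n+1), (multDtilde n s t : ℤ) * y s =
        (if s.val = n - 1 then y s else 0) + (if s.val = n then y s else 0) := by
      intro s
      unfold multDtilde
      rcases (show s.val = n - 1 ∨ s.val = n ∨ (s.val ≤ n - 2) from by omega) with h' | h' | h'
      · rw [if_pos (by omega), if_pos h', if_neg (by omega)]; simp
      · rw [if_pos (by omega), if_neg (by omega), if_pos h']; simp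
      · rw [if_neg (by omega), if_neg (by omega), if_neg (by omega)]; simp
    rw [Finset.sum_congr rfl fun s _ => this s, Finset.sum_add_distrib,
      sum_if_eq n (n-1) (by omega), sum_if_eq n n (by omega)]
  · rw [if_neg (by omega), if_neg (by omega), if_neg (by omega), Finset.sum_eq_zero]
    intro s _
    unfold multDtilde
    rw [if_neg (by omega)]
    simp


lemma euler_right_single (n : ℕ) (hn : 4 ≤ n) (x : Fin (n+1) → ℤ) (v : Fin (n+1)) :
    eulerForm (n+1) (multDtilde n) x (Pi.single v 1) = x v - outO n x v.val := by
  unfold eulerForm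
  have h1 : (∑ w, x w * (Pi.single v 1 : Fin (n+1) → ℤ) w) = x v := by
    have : ∀ w : Fin (n+1), x w * (Pi.single v 1 : Fin (n+1) → ℤ) w = if w = v then x w else 0 := by
      intro w
      rcases eq_or_ne w v with h | h
      · subst h; simp
      · simp [Pi.single_apply, h]
    rw [Finset.sum_congr rfl fun w _ => this w, Finset.sum_ite_eq' Finset.univ v x]
    simp
  have h2 : (∑ s, ∑ t, (multDtilde n s t : ℤ) * (x t * (Pi.single v 1 : Fin (n+1) → ℤ) s)) = outO n x v.val := by
    have : ∀ s : Fin (n+1), (∑ t, (multDtilde n s t : ℤ) * (x t * (Pi.single v 1 : Fin (n+1) → ℤ) s)) =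
        if s = v then ∑ t, (multDtilde n s t : ℤ) * x t else 0 := by
      intro s
      rcases eq_or_ne s v with h | h
      · subst h; simp
      · simp [Pi.single_apply, h]
    rw [Finset.sum_congr rfl fun s _ => this s,
      Finset.sum_ite_eq' Finset.univ v (fun s => ∑ t, (multDtilde n s t : ℤ) * x t)]
    simp [out_sum n hn x v]
  rw [h1, h2]

lemma euler_left_single (n : ℕ) (hn : 4 ≤ n) (y : Fin (n+1) → ℤ) (v : Fin (n+1)) :
    eulerForm (n+1) (multDtilde n) (Pi.single v 1) y = y v - inI n y v.val := by
  unfold eulerForm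
  have h1 : (∑ w, (Pi.single v 1 : Fin (n+1) → ℤ) w * y w) = y v := by
    have : ∀ w : Fin (n+1), (Pi.single v 1 : Fin (n+1) → ℤ) w * y w = if w = v then y w else 0 := by
      intro w
      rcases eq_or_ne w v with h | h
      · subst h; simp
      · simp [Pi.single_apply, h]
    rw [Finset.sum_congr rfl fun w _ => this w, Finset.sum_ite_eq' Finset.univ v y]
    simp
  have h2 : (∑ s, ∑ t, (multDtilde n s t : ℤ) * ((Pi.single v 1 : Fin (n+1) → ℤ) t * y s)) = inI n y v.val := by
    have key : ∀ s : Fin (n+1), (∑ t, (multDtilde n s t : ℤ) * ((Pi.single v 1 : Fin (n+1) → ℤ) t * y s)) =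
        (multDtilde n s v : ℤ) * y s := by
      intro s
      have : ∀ t : Fin (n+1), (multDtilde n s t : ℤ) * ((Pi.single v 1 : Fin (n+1) → ℤ) t * y s) =
          if t = v then (multDtilde n s t : ℤ) * y s else 0 := by
        intro t
        rcases eq_or_ne t v with h | h
        · subst h; simp
        · simp [Pi.single_apply, h]
      rw [Finset.sum_congr rfl fun t _ => this t,
        Finset.sum_ite_eq' Finset.univ v (fun t => (multDtilde n s t : ℤ) * y s)]
      simp
    rw [Finset.sum_congr rfl fun s _ => key s, in_sum n hn y v]
  rw [h1, h2]


/-- Closed form for the k-th Coxeter iterate, valid for 1 ≤ k ≤ n-3. -/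
def F (n k : ℕ) (x : Fin (n+1) → ℤ) (v : Fin (n+1)) : ℤ :=
  if v.val = 0 then
    (if k % 2 = 1 then x (fv n 1) else x (fv n 0)) + x (fv n (n-1-k))
      - (x (fv n (n-1)) + x (fv n n))
  else if v.val = 1 then
    (if k % 2 = 1 then x (fv n 0) else x (fv n 1)) + x (fv n (n-1-k))
      - (x (fv n (n-1)) + x (fv n n))
  else if v.val ≤ k then
    x (fv n 0) + x (fv n 1) + x (fv n (n-1-k)) + x (fv n (n-2-k+v.val))
      - 2*(x (fv n (n-1)) + x (fv n n))
  else if v.val = k+1 then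
    x (fv n 0) + x (fv n 1) + x (fv n (n-1-k)) - (x (fv n (n-1)) + x (fv n n))
  else if v.val ≤ n-2 then
    x (fv n (v.val - k)) + x (fv n (n-1-k)) - (x (fv n (n-1)) + x (fv n n))
  else if v.val = n-1 then
    x (fv n (n-1-k)) - (if k % 2 = 1 then x (fv n (n-1)) else x (fv n n))
  else
    x (fv n (n-1-k)) - (if k % 2 = 1 then x (fv n n) else x (fv n (n-1)))

section FA
variable {n k : ℕ} (x : Fin (n+1) → ℤ) {v : Fin (n+1)}

lemma FA0 (h : v.val = 0) :
    F n k x v = (if k % 2 = 1 then x (fv n 1) else x (fv n 0)) + x (fv n (n-1-k))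
      - (x (fv n (n-1)) + x (fv n n)) := by
  unfold F; rw [if_pos h]

lemma FA1 (h : v.val = 1) :
    F n k x v = (if k % 2 = 1 then x (fv n 0) else x (fv n 1)) + x (fv n (n-1-k))
      - (x (fv n (n-1)) + x (fv n n)) := by
  unfold F; rw [if_neg (by omega), if_pos h]

lemma FAmid (h2 : 2 ≤ v.val) (hk : v.val ≤ k) :
    F n k x v = x (fv n 0) + x (fv n 1) + x (fv n (n-1-k)) + x (fv n (n-2-k+v.val))
      - 2*(x (fv n (n-1)) + x (fv n n)) := by
  unfold F; rw [if_neg (by omega), if_neg (by omega), if_pos hk]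

lemma FAtop (h2 : 2 ≤ v.val) (hk : v.val = k+1) :
    F n k x v = x (fv n 0) + x (fv n 1) + x (fv n (n-1-k))
      - (x (fv n (n-1)) + x (fv n n)) := by
  unfold F; rw [if_neg (by omega), if_neg (by omega), if_neg (by omega), if_pos hk]

lemma FAchain (hk : k+2 ≤ v.val) (h2 : v.val ≤ n-2) :
    F n k x v = x (fv n (v.val - k)) + x (fv n (n-1-k))
      - (x (fv n (n-1)) + x (fv n n)) := by
  unfold F
  rw [if_neg (by omega), if_neg (by omega), if_neg (by omega), if_neg (by omega), if_pos h2]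

lemma FAn1 (hn : 4 ≤ n) (hkn : k ≤ n-3) (h : v.val = n-1) :
    F n k x v = x (fv n (n-1-k)) - (if k % 2 = 1 then x (fv n (n-1)) else x (fv n n)) := by
  unfold F
  rw [if_neg (by omega), if_neg (by omega), if_neg (by omega), if_neg (by omega),
    if_neg (by omega), if_pos h]

lemma FAn (hn : 4 ≤ n) (hkn : k ≤ n-3) (h : v.val = n) :
    F n k x v = x (fv n (n-1-k)) - (if k % 2 = 1 then x (fv n n) else x (fv n (n-1))) := by
  unfold F
  rw [if_neg (by omega), if_neg (by omega), if_neg (by omega), if_neg (by omega),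
    if_neg (by omega), if_neg (by omega)]

end FA


lemma xcongr {n : ℕ} (x : Fin (n+1) → ℤ) {a b : ℕ} (h : a = b) : x (fv n a) = x (fv n b) := by
  rw [h]

lemma c_eq (n : ℕ) (hn : 4 ≤ n)
    (c : (Fin (n+1) → ℤ) ≃ₗ[ℤ] (Fin (n+1) → ℤ))
    (hc : ∀ x y : Fin (n+1) → ℤ,
      eulerForm (n+1) (multDtilde n) x y = - eulerForm (n+1) (multDtilde n) y (c x))
    (x : Fin (n+1) → ℤ) : ⇑c x = F n 1 x := by
  set y : Fin (n+1) → ℤ := ⇑c x with hy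
  have key : ∀ v : Fin (n+1), y v = inI n y v.val - x v + outO n x v.val := by
    intro v
    have h := hc x (Pi.single v 1)
    rw [euler_right_single n hn x v, euler_left_single n hn (⇑c x) v] at h
    rw [hy]; linarith
  -- top vertices
  have hvn : y (fv n n) = x (fv n (n-2)) - x (fv n n) := by
    have h := key (fv n n)
    rw [fv_val (le_refl n)] at h
    unfold inI outO at h
    rw [if_neg (by omega), if_neg (by omega), if_neg (by omega), if_neg (by omega),
      if_neg (by omega), if_neg (by omega)] at h
    linarith
  have hvn1 : y (fv n (n-1)) = x (fv n (n-2)) - x (fv n (n-1)) := by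
    have h := key (fv n (n-1))
    rw [fv_val (by omega)] at h
    unfold inI outO at h
    rw [if_neg (by omega), if_neg (by omega), if_neg (by omega), if_neg (by omega),
      if_neg (by omega), if_neg (by omega)] at h
    linarith
  -- the chain, downward from n-2
  have chainAux : ∀ d j, j + d = n - 2 → 3 ≤ j →
      y (fv n j) = x (fv n (j-1)) + (x (fv n (n-2)) - x (fv n (n-1)) - x (fv n n)) := by
    intro d
    induction d with
    | zero =>
      intro j hj h3
      have hjv : j = n - 2 := by omega
      subst hjv
      have h := key (fv n (n-2))
      rw [fv_val (by omega)] at h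
      unfold inI outO at h
      rw [if_neg (by omega), if_neg (by omega), if_pos rfl, if_neg (by omega),
        if_neg (by omega), if_pos (by omega)] at h
      rw [h, hvn, hvn1, xcongr x (show n-2-1 = n-3 by omega)]
      ring
    | succ d ih =>
      intro j hj h3
      have h := key (fv n j)
      rw [fv_val (by omega)] at h
      unfold inI outO at h
      rw [if_neg (by omega), if_pos (by omega), if_neg (by omega), if_neg (by omega),
        if_pos (by omega)] at h
      rw [h, ih (j+1) (by omega) (by omega), xcongr x (show j+1-1 = j by omega)]
      ring
  have hchain : ∀ j, 3 ≤ j → j ≤ n-2 →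
      y (fv n j) = x (fv n (j-1)) + (x (fv n (n-2)) - x (fv n (n-1)) - x (fv n n)) :=
    fun j h3 h2 => chainAux (n-2-j) j (by omega) h3
  -- vertex 2
  have hv2 : y (fv n 2) = x (fv n 0) + x (fv n 1)
      + (x (fv n (n-2)) - x (fv n (n-1)) - x (fv n n)) := by
    have h := key (fv n 2)
    rw [fv_val (by omega)] at h
    unfold inI outO at h
    rcases (show n = 4 ∨ 5 ≤ n from by omega) with h4 | h5
    · rw [if_neg (by omega), if_neg (by omega), if_pos (by omega), if_neg (by omega),
        if_pos rfl] at h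
      rw [h, hvn, hvn1, xcongr x (show n-2 = 2 by omega)]
      ring
    · rw [if_neg (by omega), if_pos (by omega), if_neg (by omega),
        if_pos rfl] at h
      rw [h, hchain 3 (by omega) (by omega), xcongr x (show 3-1 = 2 by omega)]
      ring
  have hv1 : y (fv n 1) = x (fv n 0)
      + (x (fv n (n-2)) - x (fv n (n-1)) - x (fv n n)) := by
    have h := key (fv n 1)
    rw [fv_val (by omega)] at h
    unfold inI outO at h
    rw [if_pos (by omega), if_pos (by omega)] at h
    rw [h, hv2]; ring
  have hv0 : y (fv n 0) = x (fv n 1)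
      + (x (fv n (n-2)) - x (fv n (n-1)) - x (fv n n)) := by
    have h := key (fv n 0)
    rw [fv_val (by omega)] at h
    unfold inI outO at h
    rw [if_pos (by omega), if_pos (by omega)] at h
    rw [h, hv2]; ring
  -- assemble
  funext v
  have hvval : v.val ≤ n := by omega
  rcases (show v.val = 0 ∨ v.val = 1 ∨ v.val = 2 ∨ (3 ≤ v.val ∧ v.val ≤ n-2) ∨ v.val = n-1
      ∨ v.val = n from by omega) with h | h | h | h | h | h
  · rw [← fv_eq v, h, FA0 x (by rw [fv_val (by omega)] <;> omega),
      hv0, if_pos rfl, xcongr x (show n-1-1 = n-2 by omega)]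
    ring
  · rw [← fv_eq v, h, FA1 x (by rw [fv_val (by omega)] <;> omega),
      hv1, if_pos rfl, xcongr x (show n-1-1 = n-2 by omega)]
    ring
  · rw [← fv_eq v, h,
      FAtop x (by rw [fv_val (by omega)] <;> omega) (by rw [fv_val (by omega)] <;> omega),
      hv2, xcongr x (show n-1-1 = n-2 by omega)]
    ring
  · rw [← fv_eq v,
      FAchain x (by rw [fv_val hvval]; omega) (by rw [fv_val hvval]; omega),
      fv_val hvval, hchain v.val h.1 h.2,
      xcongr x (show n-1-1 = n-2 by omega)]
    ring
  · rw [← fv_eq v, h,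
      FAn1 x hn (by omega) (by rw [fv_val (by omega)] <;> omega),
      hvn1, if_pos rfl, xcongr x (show n-1-1 = n-2 by omega)]
  · rw [← fv_eq v, h,
      FAn x hn (by omega) (by rw [fv_val (by omega)] <;> omega),
      hvn, if_pos rfl, xcongr x (show n-1-1 = n-2 by omega)]


lemma if_par0 {α : Sort*} {k : ℕ} (hp : k % 2 = 0) (a b : α) :
    (if k % 2 = 1 then a else b) = b := by rw [if_neg (by omega)]

lemma if_par1 {α : Sort*} {k : ℕ} (hp : k % 2 = 1) (a b : α) :
    (if k % 2 = 1 then a else b) = a := by rw [if_pos hp]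

lemma step (n k : ℕ) (hn : 4 ≤ n) (hk1 : 1 ≤ k) (hk2 : k ≤ n-4) (x : Fin (n+1) → ℤ) :
    F n 1 (F n k x) = F n (k+1) x := by
  have hkn3 : k ≤ n-3 := by omega
  have hy0 : (F n k x) (fv n 0) = (if k % 2 = 1 then x (fv n 1) else x (fv n 0))
      + x (fv n (n-1-k)) - (x (fv n (n-1)) + x (fv n n)) := FA0 x (fv_val (by omega))
  have hy1 : (F n k x) (fv n 1) = (if k % 2 = 1 then x (fv n 0) else x (fv n 1))
      + x (fv n (n-1-k)) - (x (fv n (n-1)) + x (fv n n)) := FA1 x (fv_val (by omega))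
  have hyn2 : (F n k x) (fv n (n-2)) = x (fv n (n-2-k)) + x (fv n (n-1-k))
      - (x (fv n (n-1)) + x (fv n n)) := by
    rw [FAchain x (by rw [fv_val (by omega)] <;> omega) (by rw [fv_val (by omega)] <;> omega),
      fv_val (by omega)]
  have hyn1 : (F n k x) (fv n (n-1)) = x (fv n (n-1-k))
      - (if k % 2 = 1 then x (fv n (n-1)) else x (fv n n)) :=
    FAn1 x hn hkn3 (fv_val (by omega))
  have hyn : (F n k x) (fv n n) = x (fv n (n-1-k))
      - (if k % 2 = 1 then x (fv n n) else x (fv n (n-1))) :=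
    FAn x hn hkn3 (fv_val (by omega))
  funext v
  have hj : v.val ≤ n := by omega
  rcases (show v.val = 0 ∨ v.val = 1 ∨ v.val = 2 ∨ (3 ≤ v.val ∧ v.val ≤ k+1) ∨ v.val = k+2
      ∨ (k+3 ≤ v.val ∧ v.val ≤ n-2) ∨ v.val = n-1 ∨ v.val = n from by omega)
    with h | h | h | h | h | h | h | h
  · rw [FA0 (F n k x) h, if_pos (show (1:ℕ) % 2 = 1 by norm_num),
      xcongr (F n k x) (show n-1-1 = n-2 by omega), hy1, hyn2, hyn1, hyn,
      FA0 x h, xcongr x (show n-1-(k+1) = n-2-k by omega)]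
    rcases Nat.mod_two_eq_zero_or_one k with hp | hp
    · have hp' : (k+1) % 2 = 1 := by omega
      simp only [if_par0 hp, if_par1 hp']; ring
    · have hp' : (k+1) % 2 = 0 := by omega
      simp only [if_par1 hp, if_par0 hp']; ring
  · rw [FA1 (F n k x) h, if_pos (show (1:ℕ) % 2 = 1 by norm_num),
      xcongr (F n k x) (show n-1-1 = n-2 by omega), hy0, hyn2, hyn1, hyn,
      FA1 x h, xcongr x (show n-1-(k+1) = n-2-k by omega)]
    rcases Nat.mod_two_eq_zero_or_one k with hp | hp
    · have hp' : (k+1) % 2 = 1 := by omega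
      simp only [if_par0 hp, if_par1 hp']; ring
    · have hp' : (k+1) % 2 = 0 := by omega
      simp only [if_par1 hp, if_par0 hp']; ring
  · rw [FAtop (F n k x) (by omega) (by omega),
      xcongr (F n k x) (show n-1-1 = n-2 by omega), hy0, hy1, hyn2, hyn1, hyn,
      FAmid x (by omega) (by omega), xcongr x (show n-1-(k+1) = n-2-k by omega),
      xcongr x (show n-2-(k+1)+v.val = n-1-k by omega)]
    rcases Nat.mod_two_eq_zero_or_one k with hp | hp
    · simp only [if_par0 hp]; ring
    · simp only [if_par1 hp]; ring
  · rw [FAchain (F n k x) (by omega) (by omega),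
      xcongr (F n k x) (show n-1-1 = n-2 by omega), hyn2, hyn1, hyn,
      FAmid (k := k) x (v := fv n (v.val - 1)) (by rw [fv_val (by omega)] <;> omega)
        (by rw [fv_val (by omega)] <;> omega), fv_val (show v.val - 1 ≤ n by omega),
      FAmid x (by omega) (by omega),
      xcongr x (show n-1-(k+1) = n-2-k by omega),
      xcongr x (show n-2-k+(v.val-1) = n-2-(k+1)+v.val by omega)]
    rcases Nat.mod_two_eq_zero_or_one k with hp | hp
    · simp only [if_par0 hp]; ring
    · simp only [if_par1 hp]; ring
  · rw [FAchain (F n k x) (by omega) (by omega),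
      xcongr (F n k x) (show n-1-1 = n-2 by omega), hyn2, hyn1, hyn,
      FAtop (k := k) x (v := fv n (v.val - 1)) (by rw [fv_val (by omega)] <;> omega)
        (by rw [fv_val (by omega)] <;> omega),
      FAtop x (by omega) (by omega),
      xcongr x (show n-1-(k+1) = n-2-k by omega)]
    rcases Nat.mod_two_eq_zero_or_one k with hp | hp
    · simp only [if_par0 hp]; ring
    · simp only [if_par1 hp]; ring
  · rw [FAchain (F n k x) (by omega) (by omega),
      xcongr (F n k x) (show n-1-1 = n-2 by omega), hyn2, hyn1, hyn,
      FAchain (k := k) x (v := fv n (v.val - 1)) (by rw [fv_val (by omega)] <;> omega)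
        (by rw [fv_val (by omega)] <;> omega), fv_val (show v.val - 1 ≤ n by omega),
      FAchain x (by omega) (by omega),
      xcongr x (show n-1-(k+1) = n-2-k by omega),
      xcongr x (show v.val - 1 - k = v.val - (k+1) by omega)]
    rcases Nat.mod_two_eq_zero_or_one k with hp | hp
    · simp only [if_par0 hp]; ring
    · simp only [if_par1 hp]; ring
  · rw [FAn1 (F n k x) hn (by omega) h, if_pos (show (1:ℕ) % 2 = 1 by norm_num),
      xcongr (F n k x) (show n-1-1 = n-2 by omega), hyn2, hyn1,
      FAn1 x hn (by omega) h, xcongr x (show n-1-(k+1) = n-2-k by omega)]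
    rcases Nat.mod_two_eq_zero_or_one k with hp | hp
    · have hp' : (k+1) % 2 = 1 := by omega
      simp only [if_par0 hp, if_par1 hp']; ring
    · have hp' : (k+1) % 2 = 0 := by omega
      simp only [if_par1 hp, if_par0 hp']; ring
  · rw [FAn (F n k x) hn (by omega) h, if_pos (show (1:ℕ) % 2 = 1 by norm_num),
      xcongr (F n k x) (show n-1-1 = n-2 by omega), hyn2, hyn,
      FAn x hn (by omega) h, xcongr x (show n-1-(k+1) = n-2-k by omega)]
    rcases Nat.mod_two_eq_zero_or_one k with hp | hp
    · have hp' : (k+1) % 2 = 1 := by omega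
      simp only [if_par0 hp, if_par1 hp']; ring
    · have hp' : (k+1) % 2 = 0 := by omega
      simp only [if_par1 hp, if_par0 hp']; ring


lemma final (n : ℕ) (hn : 4 ≤ n) (heven : Even n) (x : Fin (n+1) → ℤ) :
    F n 1 (F n (n-3) x) = fun v => x v -
      (x (fv n (n-1)) + x (fv n n) - x (fv n 0) - x (fv n 1)) * deltaDtilde n v := by
  obtain ⟨m, hm⟩ := heven
  have hodd : (n-3) % 2 = 1 := by omega
  have hy0 : (F n (n-3) x) (fv n 0) = x (fv n 1)
      + x (fv n (n-1-(n-3))) - (x (fv n (n-1)) + x (fv n n)) := by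
    rw [FA0 x (fv_val (by omega)), if_pos hodd]
  have hy1 : (F n (n-3) x) (fv n 1) = x (fv n 0)
      + x (fv n (n-1-(n-3))) - (x (fv n (n-1)) + x (fv n n)) := by
    rw [FA1 x (fv_val (by omega)), if_pos hodd]
  have hyn2 : (F n (n-3) x) (fv n (n-2)) = x (fv n 0) + x (fv n 1)
      + x (fv n (n-1-(n-3))) - (x (fv n (n-1)) + x (fv n n)) := by
    rw [FAtop x (by rw [fv_val (by omega)] <;> omega) (by rw [fv_val (by omega)] <;> omega)]
  have hyn1 : (F n (n-3) x) (fv n (n-1)) = x (fv n (n-1-(n-3))) - x (fv n (n-1)) := by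
    rw [FAn1 x hn (by omega) (fv_val (by omega)), if_pos hodd]
  have hyn : (F n (n-3) x) (fv n n) = x (fv n (n-1-(n-3))) - x (fv n n) := by
    rw [FAn x hn (by omega) (fv_val (by omega)), if_pos hodd]
  funext v
  have hj : v.val ≤ n := by omega
  rcases (show v.val = 0 ∨ v.val = 1 ∨ v.val = 2 ∨ (3 ≤ v.val ∧ v.val ≤ n-2) ∨ v.val = n-1
      ∨ v.val = n from by omega) with h | h | h | h | h | h
  · have hδ : deltaDtilde n v = 1 := by unfold deltaDtilde; rw [if_pos (by omega)]
    rw [hδ, ← fv_eq v, h, FA0 (F n (n-3) x) (fv_val (by omega)),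
      if_pos (show (1:ℕ) % 2 = 1 by norm_num),
      xcongr (F n (n-3) x) (show n-1-1 = n-2 by omega), hy1, hyn2, hyn1, hyn]
    ring
  · have hδ : deltaDtilde n v = 1 := by unfold deltaDtilde; rw [if_pos (by omega)]
    rw [hδ, ← fv_eq v, h, FA1 (F n (n-3) x) (fv_val (by omega)),
      if_pos (show (1:ℕ) % 2 = 1 by norm_num),
      xcongr (F n (n-3) x) (show n-1-1 = n-2 by omega), hy0, hyn2, hyn1, hyn]
    ring
  · have hδ : deltaDtilde n v = 2 := by unfold deltaDtilde; rw [if_neg (by omega)]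
    rw [hδ, ← fv_eq v, h, FAtop (F n (n-3) x) (by rw [fv_val (by omega)] <;> omega)
        (by rw [fv_val (by omega)] <;> omega),
      xcongr (F n (n-3) x) (show n-1-1 = n-2 by omega), hy0, hy1, hyn2, hyn1, hyn,
      xcongr x (show n-1-(n-3) = 2 by omega)]
    ring
  · have hδ : deltaDtilde n v = 2 := by unfold deltaDtilde; rw [if_neg (by omega)]
    rw [hδ, FAchain (F n (n-3) x) (by omega) (by omega),
      xcongr (F n (n-3) x) (show n-1-1 = n-2 by omega), hyn2, hyn1, hyn,
      FAmid (k := n-3) x (v := fv n (v.val - 1)) (by rw [fv_val (by omega)] <;> omega)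
        (by rw [fv_val (by omega)] <;> omega), fv_val (show v.val - 1 ≤ n by omega),
      xcongr x (show n-2-(n-3)+(v.val-1) = v.val by omega), fv_eq v]
    ring
  · have hδ : deltaDtilde n v = 1 := by unfold deltaDtilde; rw [if_pos (by omega)]
    rw [hδ, ← fv_eq v, h, FAn1 (F n (n-3) x) hn (by omega) (fv_val (by omega)),
      if_pos (show (1:ℕ) % 2 = 1 by norm_num),
      xcongr (F n (n-3) x) (show n-1-1 = n-2 by omega), hyn2, hyn1]
    ring
  · have hδ : deltaDtilde n v = 1 := by unfold deltaDtilde; rw [if_pos (by omega)]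
    rw [hδ, ← fv_eq v, h, FAn (F n (n-3) x) hn (by omega) (fv_val (by omega)),
      if_pos (show (1:ℕ) % 2 = 1 by norm_num),
      xcongr (F n (n-3) x) (show n-1-1 = n-2 by omega), hyn2, hyn]
    ring

def Gd (n : ℕ) (x : Fin (n+1) → ℤ) (i : ℕ) : ℤ :=
  x (fv n i) * (if i = 0 ∨ i = 1 ∨ i = n-1 ∨ i = n then (1:ℤ) else 2)
    - outO n x i * (if i = 0 ∨ i = 1 ∨ i = n-1 ∨ i = n then (1:ℤ) else 2)

lemma euler_delta (n : ℕ) (hn : 4 ≤ n) (x : Fin (n+1) → ℤ) :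
    eulerForm (n+1) (multDtilde n) x (deltaDtilde n) =
      x (fv n (n-1)) + x (fv n n) - x (fv n 0) - x (fv n 1) := by
  unfold eulerForm
  have h2 : ∀ s : Fin (n+1), (∑ t, (multDtilde n s t : ℤ) * (x t * deltaDtilde n s))
      = outO n x s.val * deltaDtilde n s := by
    intro s
    calc ∑ t, (multDtilde n s t : ℤ) * (x t * deltaDtilde n s)
        = ∑ t, ((multDtilde n s t : ℤ) * x t) * deltaDtilde n s :=
          Finset.sum_congr rfl fun t _ => by ring
      _ = (∑ t, (multDtilde n s t : ℤ) * x t) * deltaDtilde n s := by rw [Finset.sum_mul]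
      _ = outO n x s.val * deltaDtilde n s := by rw [out_sum n hn x s]
  rw [Finset.sum_congr rfl fun s _ => h2 s, ← Finset.sum_sub_distrib]
  have hG : ∀ v : Fin (n+1), x v * deltaDtilde n v - outO n x v.val * deltaDtilde n v
      = Gd n x v.val := by
    intro v
    unfold Gd
    rw [fv_eq v]
    rfl
  rw [Finset.sum_congr rfl fun v _ => hG v]
  rw [Fin.sum_univ_eq_sum_range (Gd n x) (n+1)]
  have hGc : ∀ {a b : ℕ}, a = b → Gd n x a = Gd n x b := fun h => by rw [h]
  have hg0 : Gd n x 0 = x (fv n 0) := by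
    unfold Gd outO
    rw [if_pos (by omega), if_pos (by omega)]; ring
  have hg1 : Gd n x 1 = x (fv n 1) := by
    unfold Gd outO
    rw [if_pos (by omega), if_pos (by omega)]; ring
  have hg2 : Gd n x 2 = 2 * x (fv n 2) - 2 * (x (fv n 0) + x (fv n 1)) := by
    unfold Gd outO
    rw [if_neg (by omega), if_neg (by omega), if_pos (by omega)]; ring
  have hgn1 : Gd n x (n-1) = x (fv n (n-1)) - x (fv n (n-2)) := by
    unfold Gd outO
    rw [if_pos (by omega), if_neg (by omega), if_neg (by omega), if_neg (by omega)]; ring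
  have hgn : Gd n x n = x (fv n n) - x (fv n (n-2)) := by
    unfold Gd outO
    rw [if_pos (by omega), if_neg (by omega), if_neg (by omega), if_neg (by omega)]; ring
  have hmid : ∑ i ∈ Finset.Ico 3 (n-1), Gd n x i = 2 * x (fv n (n-1-3+2)) - 2 * x (fv n 2) := by
    have h1 : ∀ i ∈ Finset.Ico 3 (n-1), Gd n x i = 2 * x (fv n i) - 2 * x (fv n (i-1)) := by
      intro i hi
      rw [Finset.mem_Ico] at hi
      unfold Gd outO
      rw [if_neg (by omega), if_neg (by omega), if_neg (by omega), if_pos (by omega)]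
      ring
    rw [Finset.sum_congr rfl h1, Finset.sum_Ico_eq_sum_range]
    have h2 : ∀ j ∈ Finset.range (n-1-3),
        (fun i => 2 * x (fv n i) - 2 * x (fv n (i-1))) (3+j)
        = (fun j => 2 * x (fv n (j+2))) (j+1) - (fun j => 2 * x (fv n (j+2))) j := by
      intro j _
      simp only
      rw [xcongr x (show 3+j = j+1+2 by omega), xcongr x (show 3+j-1 = j+2 by omega)]
    rw [Finset.sum_congr rfl h2, Finset.sum_range_sub (fun j => 2 * x (fv n (j+2)))]
  have e1 : n + 1 = (n-1) + 1 + 1 := by omega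
  rw [e1, Finset.sum_range_succ, Finset.sum_range_succ, hGc (show n-1+1 = n by omega),
    Finset.range_eq_Ico,
    ← Finset.sum_Ico_consecutive _ (show (0:ℕ) ≤ 3 by omega) (show 3 ≤ n-1 by omega),
    ← Finset.range_eq_Ico, Finset.sum_range_succ, Finset.sum_range_succ,
    Finset.sum_range_one, hg0, hg1, hg2, hgn1, hgn, hmid,
    xcongr x (show n-1-3+2 = n-2 by omega)]
  ring

end S5

/-- for even `n ≥ 4` and the Coxeter transformation `c` of the above quiver
of type D̃_n (the unique automorphism with `⟨x,y⟩ = −⟨y,c x⟩`), one has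
`c^(n−2) x = x − ⟨x,δ⟩δ` for all `x`, and `n−2` is the least positive `b` with
`c^b x − x ∈ ℤδ` for all `x`. -/
theorem stmt_5 (n : ℕ) (hn : 4 ≤ n) (heven : Even n)
    (c : (Fin (n+1) → ℤ) ≃ₗ[ℤ] (Fin (n+1) → ℤ))
    (hc : ∀ x y : Fin (n+1) → ℤ,
      eulerForm (n+1) (multDtilde n) x y = - eulerForm (n+1) (multDtilde n) y (c x)) :
    (∀ x : Fin (n+1) → ℤ,
      (⇑c)^[n-2] x = x - eulerForm (n+1) (multDtilde n) x (deltaDtilde n) • deltaDtilde n) ∧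
    IsLeast {b : ℕ | 0 < b ∧ ∀ x : Fin (n+1) → ℤ,
      ∃ t : ℤ, (⇑c)^[b] x - x = t • deltaDtilde n} (n-2) := by
  have hiter : ∀ k, 1 ≤ k → k ≤ n-3 → ∀ x, (⇑c)^[k] x = S5.F n k x := by
    intro k hk1
    induction k, hk1 using Nat.le_induction with
    | base =>
      intro _ x
      rw [Function.iterate_one]
      exact S5.c_eq n hn c hc x
    | succ k hk ih =>
      intro hk2 x
      rw [Function.iterate_succ_apply', ih (by omega) x, S5.c_eq n hn c hc (S5.F n k x),
        S5.step n k hn hk (by omega) x]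
  have hmain : ∀ x : Fin (n+1) → ℤ, (⇑c)^[n-2] x = fun v => x v -
      (x (S5.fv n (n-1)) + x (S5.fv n n) - x (S5.fv n 0) - x (S5.fv n 1)) * deltaDtilde n v := by
    intro x
    rw [show n-2 = (n-3)+1 from by omega, Function.iterate_succ_apply',
      hiter (n-3) (by omega) (by omega) x, S5.c_eq n hn c hc (S5.F n (n-3) x),
      S5.final n hn heven x]
  have hpart1 : ∀ x : Fin (n+1) → ℤ,
      (⇑c)^[n-2] x = x - eulerForm (n+1) (multDtilde n) x (deltaDtilde n) • deltaDtilde n := by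
    intro x
    rw [hmain x, S5.euler_delta n hn x]
    funext v
    simp only [Pi.sub_apply, Pi.smul_apply, smul_eq_mul]
  refine ⟨hpart1, ⟨⟨by omega, fun x => ⟨-(eulerForm (n+1) (multDtilde n) x (deltaDtilde n)), ?_⟩⟩, ?_⟩⟩
  · rw [hpart1 x]
    funext v
    simp only [Pi.sub_apply, Pi.smul_apply, smul_eq_mul]
    ring
  · rintro b ⟨hb0, hb⟩
    by_contra hlt
    push_neg at hlt
    have hbn : b ≤ n-3 := by omega
    set x0 : Fin (n+1) → ℤ := fun v => if v.val = 0 then 1 else 0 with hx0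
    have hx0e : ∀ i : ℕ, 1 ≤ i → i ≤ n → x0 (S5.fv n i) = 0 := by
      intro i h1 h2
      simp only [hx0]
      rw [S5.fv_val h2, if_neg (by omega)]
    have hx00 : x0 (S5.fv n 0) = 1 := by
      simp only [hx0]
      rw [S5.fv_val (by omega), if_pos rfl]
    obtain ⟨t, ht⟩ := hb x0
    rw [hiter b hb0 hbn x0] at ht
    have h1 := congrFun ht (S5.fv n (n-1))
    have h2 := congrFun ht (S5.fv n 2)
    rw [Pi.sub_apply, Pi.smul_apply, smul_eq_mul,
      S5.FAn1 x0 hn hbn (S5.fv_val (by omega)),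
      hx0e (n-1-b) (by omega) (by omega), hx0e (n-1) (by omega) (by omega)] at h1
    have hδ1 : deltaDtilde n (S5.fv n (n-1)) = 1 := by
      unfold deltaDtilde
      rw [S5.fv_val (by omega), if_pos (by omega)]
    have hif : (if b % 2 = 1 then (0:ℤ) else x0 (S5.fv n n)) = 0 := by
      rcases Nat.mod_two_eq_zero_or_one b with hp | hp
      · rw [if_neg (by omega), hx0e n (by omega) (by omega)]
      · rw [if_pos hp]
    rw [hif, hδ1] at h1
    have ht0 : t = 0 := by linarith
    have hδ2 : deltaDtilde n (S5.fv n 2) = 2 := by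
      unfold deltaDtilde
      rw [S5.fv_val (by omega), if_neg (by omega)]
    have hF2 : S5.F n b x0 (S5.fv n 2) = 1 := by
      rcases (show b = 1 ∨ 2 ≤ b from by omega) with hb1 | hb2
      · rw [S5.FAtop x0 (by rw [S5.fv_val (by omega)] <;> omega)
          (by rw [S5.fv_val (by omega)] <;> omega), hx00,
          hx0e 1 (by omega) (by omega), hx0e (n-1-b) (by omega) (by omega),
          hx0e (n-1) (by omega) (by omega), hx0e n (by omega) (by omega)]
        ring
      · rw [S5.FAmid x0 (by rw [S5.fv_val (by omega)] <;> omega)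
          (by rw [S5.fv_val (by omega)] <;> omega), hx00,
          hx0e 1 (by omega) (by omega), hx0e (n-1-b) (by omega) (by omega),
          hx0e (n-2-b+(S5.fv n 2).val) (by rw [S5.fv_val (by omega)] <;> omega)
            (by rw [S5.fv_val (by omega)] <;> omega),
          hx0e (n-1) (by omega) (by omega), hx0e n (by omega) (by omega)]
        ring
    rw [Pi.sub_apply, Pi.smul_apply, smul_eq_mul, hF2, hδ2, ht0,
      hx0e 2 (by omega) (by omega)] at h2
    norm_num at h2
end

section
/- Let n ≥ 5 be odd and let Q be the quiver of type D̃_n with vertex set {0,1,…,n} and arrows n→n−2, (n−1)→n−2, i→i−1 for 3 ≤ i ≤ n−2, 2→1 and 2→0. Let δ ∈ ℤ^{n+1} have coordinates δ_0 = δ_1 = δ_{n−1} = δ_n = 1 and δ_i = 2 for 2 ≤ i ≤ n−2, and let c be the Coxeter transformation of Q. Then c^{2n−4}(x) = x − 2⟨x,δ⟩δ for all x ∈ ℤ^{n+1}; moreover 2n−4 is the least positive integer b such that c^b(x) − x ∈ ℤδ for every x ∈ ℤ^{n+1}. -/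
open Finset
open Fin.NatCast

namespace Stmt6

variable (n : ℕ)

lemma sum_fin (f : Fin (n+1) → ℤ) : ∑ v, f v = ∑ j ∈ range (n+1), f ↑j := by
  rw [← Fin.sum_univ_eq_sum_range (fun j => f ↑j) (n+1)]
  simp [Fin.cast_val_eq_self]

lemma sum_pin (m e : ℕ) (he : e < m) (f : ℕ → ℤ) :
    (∑ i ∈ range m, if i = e then f i else 0) = f e := by
  rw [Finset.sum_ite_eq' (range m) e f]
  simp [he]

lemma single_cast (s j : ℕ) (hs : s ≤ n) (hj : j ≤ n) :
    (Pi.single ((s:ℕ):Fin (n+1)) 1 : Fin (n+1) → ℤ) ↑j = if j = s then 1 else 0 := by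
  rw [Pi.single_apply]
  by_cases h : j = s
  · subst h; simp
  · rw [if_neg, if_neg h]
    exact fun e => h (by
      have := congrArg Fin.val e
      rwa [Fin.val_cast_of_lt (by omega), Fin.val_cast_of_lt (by omega)] at this)

lemma sumArrows (hn : 5 ≤ n) (a b : Fin (n+1) → ℤ) :
    (∑ s, ∑ t, (multDtilde n s t : ℤ) * (a t * b s))
      = a ↑(n-2) * b ↑n + a ↑(n-2) * b ↑(n-1)
        + (∑ i ∈ Finset.Icc 3 (n-2), a ↑(i-1) * b ↑i)
        + a ↑(1:ℕ) * b ↑(2:ℕ) + a ↑(0:ℕ) * b ↑(2:ℕ) := by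
  rw [sum_fin n (fun s => ∑ t, (multDtilde n s t : ℤ) * (a t * b s))]
  have conv1 : ∀ j ∈ range (n+1),
      (∑ t, (multDtilde n (j:Fin (n+1)) t : ℤ) * (a t * b ↑j))
      = ∑ i ∈ range (n+1), (multDtilde n ↑j ↑i : ℤ) * (a ↑i * b ↑j) := fun j _ =>
    sum_fin n _
  rw [Finset.sum_congr rfl conv1]
  have key : ∀ j ∈ range (n+1), ∀ i ∈ range (n+1),
      (multDtilde n (j : Fin (n+1)) (i : Fin (n+1)) : ℤ) * (a ↑i * b ↑j)
      = (if i = n-2 then (if j = n then a ↑i * b ↑j else 0) else 0)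
        + (if i = n-2 then (if j = n-1 then a ↑i * b ↑j else 0) else 0)
        + (if i = j-1 then (if 3 ≤ j ∧ j ≤ n-2 then a ↑i * b ↑j else 0) else 0)
        + (if i = 1 then (if j = 2 then a ↑i * b ↑j else 0) else 0)
        + (if i = 0 then (if j = 2 then a ↑i * b ↑j else 0) else 0) := by
    intro j hj i hi
    simp only [mem_range] at hj hi
    have hjv : ((j : Fin (n+1))).val = j := Fin.val_cast_of_lt hj
    have hiv : ((i : Fin (n+1))).val = i := Fin.val_cast_of_lt hi
    simp only [multDtilde, hjv, hiv, Nat.cast_ite, Nat.cast_one, Nat.cast_zero]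
    split_ifs <;> first | ring1 | omega | (exfalso; omega)
  rw [Finset.sum_congr rfl (fun j hj => Finset.sum_congr rfl (key j hj))]
  simp only [Finset.sum_add_distrib]
  have pin : ∀ (m e : ℕ), e < m → ∀ f : ℕ → ℤ,
      (∑ i ∈ range m, if i = e then f i else 0) = f e := by
    intro m e he f
    rw [Finset.sum_ite_eq' (range m) e f]
    simp [he]
  have h1 : (∑ j ∈ range (n+1), ∑ i ∈ range (n+1),
      (if i = n-2 then (if j = n then a ↑i * b ↑j else 0) else 0)) = a ↑(n-2) * b ↑n := by
    have e1 : ∀ j ∈ range (n+1), (∑ i ∈ range (n+1),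
        if i = n-2 then (if j = n then a ↑i * b ↑j else 0) else 0)
        = (if j = n then a ↑(n-2) * b ↑j else 0) :=
      fun j _ => pin (n+1) (n-2) (by omega) _
    rw [Finset.sum_congr rfl e1, pin (n+1) n (by omega) (fun j => a ↑(n-2) * b ↑j)]
  have h2 : (∑ j ∈ range (n+1), ∑ i ∈ range (n+1),
      (if i = n-2 then (if j = n-1 then a ↑i * b ↑j else 0) else 0)) = a ↑(n-2) * b ↑(n-1) := by
    have e1 : ∀ j ∈ range (n+1), (∑ i ∈ range (n+1),
        if i = n-2 then (if j = n-1 then a ↑i * b ↑j else 0) else 0)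
        = (if j = n-1 then a ↑(n-2) * b ↑j else 0) :=
      fun j _ => pin (n+1) (n-2) (by omega) _
    rw [Finset.sum_congr rfl e1, pin (n+1) (n-1) (by omega) (fun j => a ↑(n-2) * b ↑j)]
  have h3 : (∑ j ∈ range (n+1), ∑ i ∈ range (n+1),
      (if i = j-1 then (if 3 ≤ j ∧ j ≤ n-2 then a ↑i * b ↑j else 0) else 0))
      = ∑ i ∈ Finset.Icc 3 (n-2), a ↑(i-1) * b ↑i := by
    have e1 : ∀ j ∈ range (n+1), (∑ i ∈ range (n+1),
        if i = j-1 then (if 3 ≤ j ∧ j ≤ n-2 then a ↑i * b ↑j else 0) else 0)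
        = (if 3 ≤ j ∧ j ≤ n-2 then a ↑(j-1) * b ↑j else 0) := by
      intro j hj
      simp only [mem_range] at hj
      exact pin (n+1) (j-1) (by omega) _
    rw [Finset.sum_congr rfl e1, ← Finset.sum_filter]
    congr 1
    ext j
    simp only [Finset.mem_filter, mem_range, Finset.mem_Icc]
    omega
  have h4 : (∑ j ∈ range (n+1), ∑ i ∈ range (n+1),
      (if i = 1 then (if j = 2 then a ↑i * b ↑j else 0) else 0)) = a ↑(1:ℕ) * b ↑(2:ℕ) := by
    have e1 : ∀ j ∈ range (n+1), (∑ i ∈ range (n+1),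
        if i = 1 then (if j = 2 then a ↑i * b ↑j else 0) else 0)
        = (if j = 2 then a ↑(1:ℕ) * b ↑j else 0) :=
      fun j _ => pin (n+1) 1 (by omega) _
    rw [Finset.sum_congr rfl e1, pin (n+1) 2 (by omega) (fun j => a ↑(1:ℕ) * b ↑j)]
  have h5 : (∑ j ∈ range (n+1), ∑ i ∈ range (n+1),
      (if i = 0 then (if j = 2 then a ↑i * b ↑j else 0) else 0)) = a ↑(0:ℕ) * b ↑(2:ℕ) := by
    have e1 : ∀ j ∈ range (n+1), (∑ i ∈ range (n+1),
        if i = 0 then (if j = 2 then a ↑i * b ↑j else 0) else 0)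
        = (if j = 2 then a ↑(0:ℕ) * b ↑j else 0) :=
      fun j _ => pin (n+1) 0 (by omega) _
    rw [Finset.sum_congr rfl e1, pin (n+1) 2 (by omega) (fun j => a ↑(0:ℕ) * b ↑j)]
  rw [h1, h2, h3, h4, h5]


lemma eulerEval (hn : 5 ≤ n) (a b : Fin (n+1) → ℤ) :
    eulerForm (n+1) (multDtilde n) a b
      = (∑ j ∈ range (n+1), a ↑j * b ↑j)
        - (a ↑(n-2) * b ↑n + a ↑(n-2) * b ↑(n-1)
          + (∑ i ∈ Finset.Icc 3 (n-2), a ↑(i-1) * b ↑i)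
          + a ↑(1:ℕ) * b ↑(2:ℕ) + a ↑(0:ℕ) * b ↑(2:ℕ)) := by
  rw [eulerForm, sumArrows n hn a b, sum_fin n (fun v => a v * b v)]

lemma euler_single_left (hn : 5 ≤ n) (s : ℕ) (hs : s ≤ n) (z : Fin (n+1) → ℤ) :
    eulerForm (n+1) (multDtilde n) (Pi.single (s : Fin (n+1)) 1) z
      = z ↑s - (if s = n-2 then z ↑(n-1) + z ↑n else 0)
          - (if 2 ≤ s ∧ s ≤ n-3 then z ↑(s+1) else 0)
          - (if s ≤ 1 then z ↑(2:ℕ) else 0) := by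
  rw [eulerEval n hn]
  have hsum : (∑ j ∈ range (n+1), (Pi.single ((s:ℕ):Fin (n+1)) 1 : Fin (n+1) → ℤ) ↑j * z ↑j) = z ↑s := by
    have e1 : ∀ j ∈ range (n+1),
        (Pi.single ((s:ℕ):Fin (n+1)) 1 : Fin (n+1) → ℤ) ↑j * z ↑j = if j = s then z ↑j else 0 := by
      intro j hj; simp only [mem_range] at hj
      rw [single_cast n s j hs (by omega)]
      split_ifs <;> ring
    rw [Finset.sum_congr rfl e1, sum_pin (n+1) s (by omega) (fun j => z ↑j)]
  have hIcc : (∑ i ∈ Finset.Icc 3 (n-2),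
        (Pi.single ((s:ℕ):Fin (n+1)) 1 : Fin (n+1) → ℤ) ↑(i-1) * z ↑i)
      = (if 2 ≤ s ∧ s ≤ n-3 then z ↑(s+1) else 0) := by
    have e1 : ∀ i ∈ Finset.Icc 3 (n-2),
        (Pi.single ((s:ℕ):Fin (n+1)) 1 : Fin (n+1) → ℤ) ↑(i-1) * z ↑i = if i = s+1 then z ↑i else 0 := by
      intro i hi; simp only [Finset.mem_Icc] at hi
      rw [single_cast n s (i-1) hs (by omega)]
      by_cases h : i = s + 1
      · rw [if_pos (by omega), if_pos h]; ring
      · rw [if_neg (by omega), if_neg h]; ring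
    rw [Finset.sum_congr rfl e1, Finset.sum_ite_eq' (Finset.Icc 3 (n-2)) (s+1) (fun i => z ↑i)]
    by_cases h : 2 ≤ s ∧ s ≤ n-3
    · rw [if_pos (by simp only [Finset.mem_Icc]; omega), if_pos h]
    · rw [if_neg (by simp only [Finset.mem_Icc]; omega), if_neg h]
  rw [hsum, hIcc, single_cast n s (n-2) hs (by omega), single_cast n s 1 hs (by omega),
    single_cast n s 0 hs (by omega)]
  split_ifs <;> first | ring1 | omega | (exfalso; omega)

lemma euler_single_right (hn : 5 ≤ n) (s : ℕ) (hs : s ≤ n) (x : Fin (n+1) → ℤ) :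
    eulerForm (n+1) (multDtilde n) x (Pi.single (s : Fin (n+1)) 1)
      = x ↑s - (if s = n then x ↑(n-2) else 0) - (if s = n-1 then x ↑(n-2) else 0)
          - (if 3 ≤ s ∧ s ≤ n-2 then x ↑(s-1) else 0)
          - (if s = 2 then x ↑(0:ℕ) + x ↑(1:ℕ) else 0) := by
  rw [eulerEval n hn]
  have hsum : (∑ j ∈ range (n+1), x ↑j * (Pi.single ((s:ℕ):Fin (n+1)) 1 : Fin (n+1) → ℤ) ↑j) = x ↑s := by
    have e1 : ∀ j ∈ range (n+1),
        x ↑j * (Pi.single ((s:ℕ):Fin (n+1)) 1 : Fin (n+1) → ℤ) ↑j = if j = s then x ↑j else 0 := by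
      intro j hj; simp only [mem_range] at hj
      rw [single_cast n s j hs (by omega)]
      split_ifs <;> ring
    rw [Finset.sum_congr rfl e1, sum_pin (n+1) s (by omega) (fun j => x ↑j)]
  have hIcc : (∑ i ∈ Finset.Icc 3 (n-2),
        x ↑(i-1) * (Pi.single ((s:ℕ):Fin (n+1)) 1 : Fin (n+1) → ℤ) ↑i)
      = (if 3 ≤ s ∧ s ≤ n-2 then x ↑(s-1) else 0) := by
    have e1 : ∀ i ∈ Finset.Icc 3 (n-2),
        x ↑(i-1) * (Pi.single ((s:ℕ):Fin (n+1)) 1 : Fin (n+1) → ℤ) ↑i = if i = s then x ↑(i-1) else 0 := by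
      intro i hi; simp only [Finset.mem_Icc] at hi
      rw [single_cast n s i hs (by omega)]
      split_ifs <;> ring
    rw [Finset.sum_congr rfl e1, Finset.sum_ite_eq' (Finset.Icc 3 (n-2)) s (fun i => x ↑(i-1))]
    by_cases h : 3 ≤ s ∧ s ≤ n-2
    · rw [if_pos (by simp only [Finset.mem_Icc]; omega), if_pos h]
    · rw [if_neg (by simp only [Finset.mem_Icc]; omega), if_neg h]
  rw [hsum, hIcc, single_cast n s n hs (by omega), single_cast n s (n-1) hs (by omega),
    single_cast n s 2 hs (by omega)]
  split_ifs <;> first | ring1 | omega | (exfalso; omega)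

lemma deltaVal (j : ℕ) (hj : j ≤ n) :
    deltaDtilde n ↑j = if j = 0 ∨ j = 1 ∨ j = n-1 ∨ j = n then 1 else 2 := by
  unfold deltaDtilde; rw [Fin.val_cast_of_lt (by omega)]

lemma range_split (hn : 5 ≤ n) (f : ℕ → ℤ) :
    (∑ j ∈ range (n+1), f j)
      = f 0 + f 1 + (∑ j ∈ Finset.Icc 2 (n-3), f j) + f (n-2) + f (n-1) + f n := by
  have h : range (n+1) = (Finset.Icc 2 (n-3)) ∪ {0, 1, n-2, n-1, n} := by
    ext j
    simp only [Finset.mem_union, Finset.mem_Icc, Finset.mem_insert, Finset.mem_singleton,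
      mem_range]
    omega
  rw [h, Finset.sum_union]
  · have d0 : (0:ℕ) ∉ ({1, n-2, n-1, n} : Finset ℕ) := by simp; omega
    have d1 : (1:ℕ) ∉ ({n-2, n-1, n} : Finset ℕ) := by simp; omega
    have d2 : (n-2:ℕ) ∉ ({n-1, n} : Finset ℕ) := by simp; omega
    have d3 : (n-1:ℕ) ∉ ({n} : Finset ℕ) := by simp; omega
    rw [Finset.sum_insert d0, Finset.sum_insert d1, Finset.sum_insert d2,
      Finset.sum_insert d3, Finset.sum_singleton]
    ring
  · rw [Finset.disjoint_left]
    intro a ha hb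
    simp only [Finset.mem_Icc] at ha
    simp only [Finset.mem_insert, Finset.mem_singleton] at hb
    omega

lemma defectEval (hn : 5 ≤ n) (x : Fin (n+1) → ℤ) :
    eulerForm (n+1) (multDtilde n) x (deltaDtilde n)
      = x ↑(n-1) + x ↑n - x ↑(0:ℕ) - x ↑(1:ℕ) := by
  rw [eulerEval n hn]
  have h1 : (∑ j ∈ range (n+1), x ↑j * deltaDtilde n ↑j)
      = 2 * (∑ j ∈ range (n+1), x ↑j) - (x ↑(0:ℕ) + x ↑(1:ℕ) + x ↑(n-1) + x ↑n) := by
    have e1 : ∀ j ∈ range (n+1), x ↑j * deltaDtilde n ↑j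
        = 2 * x ↑j - ((if j = 0 then x ↑j else 0) + (if j = 1 then x ↑j else 0)
            + (if j = n-1 then x ↑j else 0) + (if j = n then x ↑j else 0)) := by
      intro j hj; simp only [mem_range] at hj
      rw [deltaVal n j (by omega)]
      split_ifs <;> first | ring1 | omega | (exfalso; omega)
    rw [Finset.sum_congr rfl e1, Finset.sum_sub_distrib, ← Finset.mul_sum]
    simp only [Finset.sum_add_distrib]
    rw [sum_pin (n+1) 0 (by omega), sum_pin (n+1) 1 (by omega),
      sum_pin (n+1) (n-1) (by omega), sum_pin (n+1) n (by omega)]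
  have h2 : (∑ i ∈ Finset.Icc 3 (n-2), x ↑(i-1) * deltaDtilde n ↑i)
      = 2 * (∑ j ∈ Finset.Icc 2 (n-3), x ↑j) := by
    have e1 : ∀ i ∈ Finset.Icc 3 (n-2), x ↑(i-1) * deltaDtilde n ↑i = 2 * x ↑(i-1) := by
      intro i hi; simp only [Finset.mem_Icc] at hi
      rw [deltaVal n i (by omega), if_neg (by omega)]; ring
    rw [Finset.sum_congr rfl e1, ← Finset.mul_sum]
    congr 1
    have hmap : Finset.Icc 3 (n-2) = (Finset.Icc 2 (n-3)).map (addRightEmbedding 1) := by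
      rw [Finset.map_add_right_Icc]; congr 1 <;> omega
    rw [hmap, Finset.sum_map]
    apply Finset.sum_congr rfl
    intro j hj
    simp only [addRightEmbedding_apply]
    have : j + 1 - 1 = j := by omega
    rw [this]
  rw [h1, h2, deltaVal n n (by omega), deltaVal n (n-1) (by omega), deltaVal n 2 (by omega),
    if_pos (by omega), if_pos (by omega), if_neg (by omega),
    range_split n hn (fun j => x ↑j)]
  ring1

lemma nondeg (hn : 5 ≤ n) (z1 z2 : Fin (n+1) → ℤ)
    (h : ∀ s : ℕ, s ≤ n →
      eulerForm (n+1) (multDtilde n) (Pi.single (s : Fin (n+1)) 1) z1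
        = eulerForm (n+1) (multDtilde n) (Pi.single (s : Fin (n+1)) 1) z2) :
    z1 = z2 := by
  have E : ∀ s : ℕ, s ≤ n →
      z1 ↑s - (if s = n-2 then z1 ↑(n-1) + z1 ↑n else 0)
        - (if 2 ≤ s ∧ s ≤ n-3 then z1 ↑(s+1) else 0)
        - (if s ≤ 1 then z1 ↑(2:ℕ) else 0)
      = z2 ↑s - (if s = n-2 then z2 ↑(n-1) + z2 ↑n else 0)
        - (if 2 ≤ s ∧ s ≤ n-3 then z2 ↑(s+1) else 0)
        - (if s ≤ 1 then z2 ↑(2:ℕ) else 0) := by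
    intro s hs
    have := h s hs
    rwa [euler_single_left n hn s hs z1, euler_single_left n hn s hs z2] at this
  have hN : z1 ↑n = z2 ↑n := by
    have := E n (le_refl n)
    rwa [if_neg (by omega), if_neg (by omega), if_neg (by omega),
      if_neg (by omega), if_neg (by omega), if_neg (by omega), sub_zero, sub_zero,
      sub_zero, sub_zero, sub_zero, sub_zero] at this
  have hN1 : z1 ↑(n-1) = z2 ↑(n-1) := by
    have := E (n-1) (by omega)
    rwa [if_neg (by omega), if_neg (by omega), if_neg (by omega),
      if_neg (by omega), if_neg (by omega), if_neg (by omega), sub_zero, sub_zero,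
      sub_zero, sub_zero, sub_zero, sub_zero] at this
  have hN2 : z1 ↑(n-2) = z2 ↑(n-2) := by
    have := E (n-2) (by omega)
    rw [if_pos rfl, if_pos rfl, if_neg (by omega), if_neg (by omega),
      if_neg (by omega), if_neg (by omega)] at this
    omega
  have hMid : ∀ m : ℕ, ∀ s : ℕ, 2 ≤ s → s ≤ n-2 → n-2-s = m → z1 ↑s = z2 ↑s := by
    intro m
    induction m with
    | zero => intro s h2 h3 h4
              have : s = n - 2 := by omega
              rw [this]; exact hN2
    | succ m ih =>
        intro s h2 h3 h4
        have hs3 : s ≤ n - 3 := by omega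
        have := E s (by omega)
        rw [if_neg (by omega), if_pos (by omega), if_neg (by omega), if_neg (by omega),
          if_pos (by omega), if_neg (by omega)] at this
        have hnext := ih (s+1) (by omega) (by omega) (by omega)
        omega
  have h0 : z1 ↑(0:ℕ) = z2 ↑(0:ℕ) := by
    have := E 0 (by omega)
    rw [if_neg (by omega), if_neg (by omega), if_pos (by omega), if_neg (by omega),
      if_neg (by omega), if_pos (by omega)] at this
    have h2' := hMid (n-4) 2 (by omega) (by omega) (by omega)
    omega
  have h1 : z1 ↑(1:ℕ) = z2 ↑(1:ℕ) := by
    have := E 1 (by omega)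
    rw [if_neg (by omega), if_neg (by omega), if_pos (by omega), if_neg (by omega),
      if_neg (by omega), if_pos (by omega)] at this
    have h2' := hMid (n-4) 2 (by omega) (by omega) (by omega)
    omega
  funext v
  have hv : v = ((v.val : ℕ) : Fin (n+1)) := (Fin.cast_val_eq_self v).symm
  rw [hv]
  rcases Nat.lt_or_ge v.val 2 with hlt | hge
  · interval_cases h : v.val
    · exact h0
    · exact h1
  · rcases Nat.lt_or_ge v.val (n-1) with hlt2 | hge2
    · exact hMid (n-2-v.val) v.val (by omega) (by omega) rfl
    · have : v.val ≤ n := by omega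
      rcases Nat.eq_or_lt_of_le hge2 with he | hlt3
      · rw [← he]; exact hN1
      · have : v.val = n := by omega
        rw [this]; exact hN

def gg (x : Fin (n+1) → ℤ) : ℤ := x ↑(n-2) - x ↑(n-1) - x ↑n

def cAux (x : Fin (n+1) → ℤ) (j : ℕ) : ℤ :=
  (if j = 0 then x ↑(1:ℕ) else if j = 1 then x ↑(0:ℕ)
   else if j = 2 then x ↑(0:ℕ) + x ↑(1:ℕ)
   else if j = n-1 then x ↑n else if j = n then x ↑(n-1) else x ↑(j-1)) + gg n x

lemma cAux0 (x : Fin (n+1) → ℤ) : cAux n x 0 = x ↑(1:ℕ) + gg n x := by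
  unfold cAux; rw [if_pos rfl]

lemma cAux1 (x : Fin (n+1) → ℤ) : cAux n x 1 = x ↑(0:ℕ) + gg n x := by
  unfold cAux; rw [if_neg (by omega), if_pos rfl]

lemma cAux2 (x : Fin (n+1) → ℤ) : cAux n x 2 = x ↑(0:ℕ) + x ↑(1:ℕ) + gg n x := by
  unfold cAux; rw [if_neg (by omega), if_neg (by omega), if_pos rfl]

lemma cAuxMid (hn : 5 ≤ n) (x : Fin (n+1) → ℤ) (j : ℕ) (h3 : 3 ≤ j) (h4 : j ≤ n-2) :
    cAux n x j = x ↑(j-1) + gg n x := by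
  unfold cAux
  rw [if_neg (by omega), if_neg (by omega), if_neg (by omega), if_neg (by omega),
    if_neg (by omega)]

lemma cAuxN1 (hn : 5 ≤ n) (x : Fin (n+1) → ℤ) : cAux n x (n-1) = x ↑n + gg n x := by
  unfold cAux
  rw [if_neg (by omega), if_neg (by omega), if_neg (by omega), if_pos rfl]

lemma cAuxN (hn : 5 ≤ n) (x : Fin (n+1) → ℤ) : cAux n x n = x ↑(n-1) + gg n x := by
  unfold cAux
  rw [if_neg (by omega), if_neg (by omega), if_neg (by omega), if_neg (by omega), if_pos rfl]

lemma vv (j : ℕ) (hj : j ≤ n) : ((j : Fin (n+1))).val = j :=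
  Fin.val_cast_of_lt (by omega)

lemma cEq (hn : 5 ≤ n) (c : (Fin (n+1) → ℤ) ≃ₗ[ℤ] (Fin (n+1) → ℤ))
    (hc : ∀ x y : Fin (n+1) → ℤ,
      eulerForm (n+1) (multDtilde n) x y = - eulerForm (n+1) (multDtilde n) y (c x))
    (x : Fin (n+1) → ℤ) :
    ⇑c x = fun v : Fin (n+1) => cAux n x v.val := by
  apply nondeg n hn
  intro s hs
  have hL : eulerForm (n+1) (multDtilde n) (Pi.single (s : Fin (n+1)) 1) (c x)
      = - eulerForm (n+1) (multDtilde n) x (Pi.single (s : Fin (n+1)) 1) := by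
    have := hc x (Pi.single (s : Fin (n+1)) 1)
    omega
  rw [hL, euler_single_right n hn s hs x,
    euler_single_left n hn s hs (fun v : Fin (n+1) => cAux n x v.val)]
  rcases Nat.lt_or_ge s 2 with hs2 | hs2
  · rw [if_neg (by omega), if_neg (by omega), if_neg (by omega), if_neg (by omega),
      if_neg (by omega), if_neg (by omega), if_pos (by omega)]
    rw [vv n s hs, vv n 2 (by omega)]
    interval_cases s
    · rw [cAux0, cAux2]; ring
    · rw [cAux1, cAux2]; ring
  · rcases Nat.eq_or_lt_of_le hs2 with hs2' | hs2'
    · have hrfl : s = 2 := hs2'.symm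
      subst hrfl
      rw [if_neg (by omega), if_neg (by omega), if_neg (by omega), if_pos (by omega),
        if_neg (by omega), if_pos (by omega), if_neg (by omega)]
      rw [vv n 2 (by omega), vv n (2+1) (by omega)]
      rw [cAux2, cAuxMid n hn x (2+1) (by omega) (by omega)]
      have h21 : (2+1-1 : ℕ) = 2 := rfl
      rw [h21]; ring
    · rcases Nat.lt_or_ge s (n-2) with hs3 | hs3
      · -- 3 ≤ s ≤ n-3
        rw [if_neg (by omega), if_neg (by omega), if_pos (by omega), if_neg (by omega),
          if_neg (by omega), if_pos (by omega), if_neg (by omega)]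
        rw [vv n s hs, vv n (s+1) (by omega)]
        rw [cAuxMid n hn x s (by omega) (by omega), cAuxMid n hn x (s+1) (by omega) (by omega)]
        have h1 : s + 1 - 1 = s := by omega
        rw [h1]; ring
      · rcases Nat.eq_or_lt_of_le hs3 with hs4 | hs4
        · have hrfl : s = n-2 := hs4.symm
          subst hrfl
          rw [if_neg (by omega), if_neg (by omega), if_pos (by omega), if_neg (by omega),
            if_pos (by omega), if_neg (by omega), if_neg (by omega)]
          rw [vv n (n-2) (by omega), vv n (n-1) (by omega), vv n n (by omega)]
          rw [cAuxMid n hn x (n-2) (by omega) (by omega), cAuxN1 n hn x, cAuxN n hn x]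
          simp only [gg]; ring
        · rcases Nat.eq_or_lt_of_le hs with hs5 | hs5
          · rw [hs5]
            rw [if_pos rfl, if_neg (by omega), if_neg (by omega), if_neg (by omega),
              if_neg (by omega), if_neg (by omega), if_neg (by omega)]
            rw [vv n n (by omega)]
            rw [cAuxN n hn x]
            simp only [gg]; ring
          · have hrfl : s = n-1 := by omega
            subst hrfl
            rw [if_neg (by omega), if_pos rfl, if_neg (by omega), if_neg (by omega),
              if_neg (by omega), if_neg (by omega), if_neg (by omega)]
            rw [vv n (n-1) (by omega)]
            rw [cAuxN1 n hn x]
            simp only [gg]; ring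

def Gx (x : Fin (n+1) → ℤ) (k : ℕ) : ℤ :=
  if k = 0 then 0
  else if k ≤ n-3 then x ↑(n-1-k) - x ↑(n-1) - x ↑n
  else x ↑(0:ℕ) + x ↑(1:ℕ) - x ↑(n-1) - x ↑n

def Fx (x : Fin (n+1) → ℤ) (k j : ℕ) : ℤ :=
  (if j = 0 then (if Even k then x ↑(0:ℕ) else x ↑(1:ℕ))
   else if j = 1 then (if Even k then x ↑(1:ℕ) else x ↑(0:ℕ))
   else if j = n-1 then (if Even k then x ↑(n-1) else x ↑n)
   else if j = n then (if Even k then x ↑n else x ↑(n-1))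
   else if k + 2 ≤ j then x ↑(j-k)
   else x ↑(0:ℕ) + x ↑(1:ℕ) + Gx n x (k+1-j)) + Gx n x k

lemma Fx0 (x : Fin (n+1) → ℤ) (k : ℕ) :
    Fx n x k 0 = (if Even k then x ↑(0:ℕ) else x ↑(1:ℕ)) + Gx n x k := by
  unfold Fx; rw [if_pos rfl]

lemma Fx1 (x : Fin (n+1) → ℤ) (k : ℕ) :
    Fx n x k 1 = (if Even k then x ↑(1:ℕ) else x ↑(0:ℕ)) + Gx n x k := by
  unfold Fx; rw [if_neg (by omega), if_pos rfl]

lemma FxN1 (hn : 5 ≤ n) (x : Fin (n+1) → ℤ) (k : ℕ) :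
    Fx n x k (n-1) = (if Even k then x ↑(n-1) else x ↑n) + Gx n x k := by
  unfold Fx; rw [if_neg (by omega), if_neg (by omega), if_pos rfl]

lemma FxN (hn : 5 ≤ n) (x : Fin (n+1) → ℤ) (k : ℕ) :
    Fx n x k n = (if Even k then x ↑n else x ↑(n-1)) + Gx n x k := by
  unfold Fx
  rw [if_neg (by omega), if_neg (by omega), if_neg (by omega), if_pos rfl]

lemma FxMid (hn : 5 ≤ n) (x : Fin (n+1) → ℤ) (k j : ℕ) (h2 : 2 ≤ j) (hj : j ≤ n-2) :
    Fx n x k j = (if k + 2 ≤ j then x ↑(j-k)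
      else x ↑(0:ℕ) + x ↑(1:ℕ) + Gx n x (k+1-j)) + Gx n x k := by
  unfold Fx
  rw [if_neg (by omega), if_neg (by omega), if_neg (by omega), if_neg (by omega)]

lemma ggF (hn : 5 ≤ n) (x : Fin (n+1) → ℤ) (k : ℕ) (hk : k ≤ n-3) :
    Fx n x k (n-2) - Fx n x k (n-1) - Fx n x k n = Gx n x (k+1) - Gx n x k := by
  rw [FxN1 n hn, FxN n hn, FxMid n hn x k (n-2) (by omega) (by omega)]
  rcases Nat.lt_or_ge k (n-3) with h | h
  · rw [if_pos (by omega)]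
    have g1 : Gx n x (k+1) = x ↑(n-2-k) - x ↑(n-1) - x ↑n := by
      unfold Gx
      rw [if_neg (by omega), if_pos (by omega)]
      have : n-1-(k+1) = n-2-k := by omega
      rw [this]
    rw [g1]
    split_ifs <;> ring
  · have hk3 : k = n-3 := by omega
    rw [if_neg (by omega)]
    have e0 : k + 1 - (n-2) = 0 := by omega
    rw [e0]
    have g0 : Gx n x 0 = 0 := by unfold Gx; rw [if_pos rfl]
    have g1 : Gx n x (k+1) = x ↑(0:ℕ) + x ↑(1:ℕ) - x ↑(n-1) - x ↑n := by
      unfold Gx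
      rw [if_neg (by omega), if_neg (by omega)]
    rw [g0, g1]
    split_ifs <;> ring

lemma Gx0 (x : Fin (n+1) → ℤ) : Gx n x 0 = 0 := by unfold Gx; rw [if_pos rfl]

lemma Fx_zero (hn : 5 ≤ n) (x : Fin (n+1) → ℤ) (j : ℕ) (hj : j ≤ n) :
    Fx n x 0 j = x ↑j := by
  have g0 := Gx0 n x
  rcases Nat.lt_or_ge j 2 with h2 | h2
  · interval_cases j
    · rw [Fx0, g0, if_pos (by simp)]; ring
    · rw [Fx1, g0, if_pos (by simp)]; ring
  · rcases Nat.lt_or_ge j (n-1) with h3 | h3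
    · rw [FxMid n hn x 0 j h2 (by omega), g0, if_pos (by omega)]
      have : j - 0 = j := by omega
      rw [this]; ring
    · rcases Nat.eq_or_lt_of_le h3 with h4 | h4
      · rw [← h4, FxN1 n hn, g0, if_pos (by simp)]; ring
      · have h5 : j = n := by omega
        rw [h5, FxN n hn, g0, if_pos (by simp)]; ring

lemma Fx_succ (hn : 5 ≤ n) (x : Fin (n+1) → ℤ) (k : ℕ) (hk : k ≤ n-3) (j : ℕ) (hj : j ≤ n) :
    cAux n (fun v : Fin (n+1) => Fx n x k v.val) j = Fx n x (k+1) j := by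
  set Y : Fin (n+1) → ℤ := fun v : Fin (n+1) => Fx n x k v.val with hY
  have Yval : ∀ m : ℕ, m ≤ n → Y ↑m = Fx n x k m := by
    intro m hm
    rw [hY]
    simp only
    rw [vv n m hm]
  have hgg : gg n Y = Gx n x (k+1) - Gx n x k := by
    unfold gg
    rw [Yval (n-2) (by omega), Yval (n-1) (by omega), Yval n (by omega)]
    exact ggF n hn x k hk
  have heven : Even (k+1) ↔ ¬ Even k := Nat.even_add_one
  rcases Nat.lt_or_ge j 2 with h2 | h2
  · interval_cases j
    · rw [cAux0, Yval 1 (by omega), Fx1, hgg, Fx0]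
      by_cases he : Even k
      · rw [if_pos he, if_neg (by simp [heven, he])]; ring
      · rw [if_neg he, if_pos (by simp [heven, he])]; ring
    · rw [cAux1, Yval 0 (by omega), Fx0, hgg, Fx1]
      by_cases he : Even k
      · rw [if_pos he, if_neg (by simp [heven, he])]; ring
      · rw [if_neg he, if_pos (by simp [heven, he])]; ring
  · rcases Nat.lt_or_ge j (n-1) with h3 | h3
    · rcases Nat.eq_or_lt_of_le h2 with h2' | h2'
      · rw [← h2']
        rw [cAux2, Yval 0 (by omega), Yval 1 (by omega), Fx0, Fx1, hgg,
          FxMid n hn x (k+1) 2 (by omega) (by omega)]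
        have e1 : k + 1 + 1 - 2 = k := by omega
        rw [e1]
        by_cases he : Even k
        · rw [if_pos he, if_pos he, if_neg (by omega)]; ring
        · rw [if_neg he, if_neg he, if_neg (by omega)]; ring
      · rw [cAuxMid n hn Y j (by omega) (by omega), Yval (j - 1) (by omega),
          FxMid n hn x k (j - 1) (by omega) (by omega),
          FxMid n hn x (k+1) j (by omega) (by omega), hgg]
        rcases Nat.lt_or_ge j (k+3) with h4 | h4
        · rw [if_neg (by omega), if_neg (by omega)]
          have e1 : k + 1 - (j - 1) = k + 1 + 1 - j := by omega
          rw [e1]; ring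
        · rw [if_pos (by omega), if_pos (by omega)]
          have e1 : j - 1 - k = j - (k+1) := by omega
          rw [e1]; ring
    · rcases Nat.eq_or_lt_of_le h3 with h4 | h4
      · rw [← h4]
        rw [cAuxN1 n hn, Yval n (by omega), FxN n hn, hgg, FxN1 n hn]
        by_cases he : Even k
        · rw [if_pos he, if_neg (by simp [heven, he])]; ring
        · rw [if_neg he, if_pos (by simp [heven, he])]; ring
      · have h5 : j = n := by omega
        rw [h5]
        rw [cAuxN n hn, Yval (n-1) (by omega), FxN1 n hn, hgg, FxN n hn]
        by_cases he : Even k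
        · rw [if_pos he, if_neg (by simp [heven, he])]; ring
        · rw [if_neg he, if_pos (by simp [heven, he])]; ring

lemma iterEq (hn : 5 ≤ n) (c : (Fin (n+1) → ℤ) ≃ₗ[ℤ] (Fin (n+1) → ℤ))
    (hc : ∀ x y : Fin (n+1) → ℤ,
      eulerForm (n+1) (multDtilde n) x y = - eulerForm (n+1) (multDtilde n) y (c x))
    (x : Fin (n+1) → ℤ) :
    ∀ k, k ≤ n-2 → (⇑c)^[k] x = fun v : Fin (n+1) => Fx n x k v.val := by
  intro k
  induction k with
  | zero =>
      intro _
      funext v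
      simp only [Function.iterate_zero, id_eq]
      rw [Fx_zero n hn x v.val (by omega), Fin.cast_val_eq_self]
  | succ k ih =>
      intro hk1
      rw [Function.iterate_succ_apply', ih (by omega),
        cEq n hn c hc (fun v : Fin (n+1) => Fx n x k v.val)]
      funext v
      exact Fx_succ n hn x k (by omega) v.val (by omega)

def Px (x : Fin (n+1) → ℤ) : ℤ := x ↑(0:ℕ) + x ↑(1:ℕ) - x ↑(n-1) - x ↑n

def Tf (x : Fin (n+1) → ℤ) : Fin (n+1) → ℤ := fun v =>
  (if v.val = 0 then x ↑(1:ℕ) else if v.val = 1 then x ↑(0:ℕ)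
   else if v.val = n-1 then x ↑n else if v.val = n then x ↑(n-1)
   else x v + Px n x) + Px n x

lemma TfAt0 (x : Fin (n+1) → ℤ) (v : Fin (n+1)) (h : v.val = 0) :
    Tf n x v = x ↑(1:ℕ) + Px n x := by
  simp only [Tf]; rw [if_pos h]

lemma TfAt1 (x : Fin (n+1) → ℤ) (v : Fin (n+1)) (h : v.val = 1) :
    Tf n x v = x ↑(0:ℕ) + Px n x := by
  simp only [Tf]; rw [if_neg (by omega), if_pos h]

lemma TfAtN1 (hn : 5 ≤ n) (x : Fin (n+1) → ℤ) (v : Fin (n+1)) (h : v.val = n-1) :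
    Tf n x v = x ↑n + Px n x := by
  simp only [Tf]; rw [if_neg (by omega), if_neg (by omega), if_pos h]

lemma TfAtN (hn : 5 ≤ n) (x : Fin (n+1) → ℤ) (v : Fin (n+1)) (h : v.val = n) :
    Tf n x v = x ↑(n-1) + Px n x := by
  simp only [Tf]
  rw [if_neg (by omega), if_neg (by omega), if_neg (by omega), if_pos h]

lemma TfAtMid (hn : 5 ≤ n) (x : Fin (n+1) → ℤ) (v : Fin (n+1))
    (h2 : 2 ≤ v.val) (h3 : v.val ≤ n-2) :
    Tf n x v = x v + 2 * Px n x := by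
  simp only [Tf]
  rw [if_neg (by omega), if_neg (by omega), if_neg (by omega), if_neg (by omega)]
  ring

lemma GxTop (hn : 5 ≤ n) (x : Fin (n+1) → ℤ) : Gx n x (n-2) = Px n x := by
  unfold Gx Px; rw [if_neg (by omega), if_neg (by omega)]

lemma half (hn : 5 ≤ n) (hodd : Odd n) (c : (Fin (n+1) → ℤ) ≃ₗ[ℤ] (Fin (n+1) → ℤ))
    (hc : ∀ x y : Fin (n+1) → ℤ,
      eulerForm (n+1) (multDtilde n) x y = - eulerForm (n+1) (multDtilde n) y (c x))
    (x : Fin (n+1) → ℤ) :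
    (⇑c)^[n-2] x = Tf n x := by
  rw [iterEq n hn c hc x (n-2) (le_refl _)]
  funext v
  have hne : ¬ Even (n-2) := by
    obtain ⟨m, hm⟩ := hodd
    rcases Nat.even_or_odd (n-2) with h | h
    · obtain ⟨e, he⟩ := h; omega
    · exact (Nat.not_even_iff_odd.mpr h)
  have hvn : v.val ≤ n := by omega
  rcases Nat.lt_or_ge v.val 2 with h2 | h2
  · rcases Nat.lt_or_ge v.val 1 with h1 | h1
    · have h0 : v.val = 0 := by omega
      rw [h0, Fx0, if_neg hne, GxTop n hn, TfAt0 n x v h0]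
    · have h1' : v.val = 1 := by omega
      rw [h1', Fx1, if_neg hne, GxTop n hn, TfAt1 n x v h1']
  · rcases Nat.lt_or_ge v.val (n-1) with h3 | h3
    · rw [FxMid n hn x (n-2) v.val h2 (by omega), if_neg (by omega), GxTop n hn,
        TfAtMid n hn x v h2 (by omega)]
      have e1 : n-2+1-v.val = n-1-v.val := by omega
      rw [e1]
      have g : Gx n x (n-1-v.val) = x ↑(v.val) - x ↑(n-1) - x ↑n := by
        unfold Gx
        rw [if_neg (by omega), if_pos (by omega)]
        have : n-1-(n-1-v.val) = v.val := by omega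
        rw [this]
      rw [g]
      have hx : x v = x ↑(v.val) := by rw [Fin.cast_val_eq_self]
      rw [hx]
      unfold Px; ring
    · rcases Nat.eq_or_lt_of_le h3 with h4 | h4
      · rw [← h4, FxN1 n hn, if_neg hne, GxTop n hn, TfAtN1 n hn x v h4.symm]
      · have h5 : v.val = n := by omega
        rw [h5, FxN n hn, if_neg hne, GxTop n hn, TfAtN n hn x v h5]

lemma PxTf (hn : 5 ≤ n) (x : Fin (n+1) → ℤ) : Px n (Tf n x) = Px n x := by
  have t0 : Tf n x ↑(0:ℕ) = x ↑(1:ℕ) + Px n x := TfAt0 n x _ (vv n 0 (by omega))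
  have t1 : Tf n x ↑(1:ℕ) = x ↑(0:ℕ) + Px n x := TfAt1 n x _ (vv n 1 (by omega))
  have t2 : Tf n x ↑(n-1) = x ↑n + Px n x := TfAtN1 n hn x _ (vv n (n-1) (by omega))
  have t3 : Tf n x ↑n = x ↑(n-1) + Px n x := TfAtN n hn x _ (vv n n (by omega))
  have : Px n (Tf n x)
      = Tf n x ↑(0:ℕ) + Tf n x ↑(1:ℕ) - Tf n x ↑(n-1) - Tf n x ↑n := rfl
  rw [this, t0, t1, t2, t3]; unfold Px; ring

lemma dAt0 (v : Fin (n+1)) (h : v.val = 0 ∨ v.val = 1 ∨ v.val = n-1 ∨ v.val = n) :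
    deltaDtilde n v = 1 := by
  unfold deltaDtilde; rw [if_pos h]

lemma dAtMid (hn : 5 ≤ n) (v : Fin (n+1)) (h2 : 2 ≤ v.val) (h3 : v.val ≤ n-2) :
    deltaDtilde n v = 2 := by
  unfold deltaDtilde; rw [if_neg (by omega)]

lemma part1 (hn : 5 ≤ n) (hodd : Odd n) (c : (Fin (n+1) → ℤ) ≃ₗ[ℤ] (Fin (n+1) → ℤ))
    (hc : ∀ x y : Fin (n+1) → ℤ,
      eulerForm (n+1) (multDtilde n) x y = - eulerForm (n+1) (multDtilde n) y (c x))
    (x : Fin (n+1) → ℤ) :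
    (⇑c)^[2*n-4] x
      = x - (2 * eulerForm (n+1) (multDtilde n) x (deltaDtilde n)) • deltaDtilde n := by
  have hsplit : 2*n-4 = (n-2) + (n-2) := by omega
  rw [hsplit, Function.iterate_add_apply, half n hn hodd c hc x,
    half n hn hodd c hc (Tf n x), defectEval n hn x]
  funext v
  simp only [Pi.sub_apply, Pi.smul_apply, smul_eq_mul]
  have hx : x v = x ↑(v.val) := by rw [Fin.cast_val_eq_self]
  have hP := PxTf n hn x
  rcases Nat.lt_or_ge v.val 2 with h2 | h2
  · rcases Nat.lt_or_ge v.val 1 with h1 | h1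
    · have h0 : v.val = 0 := by omega
      rw [TfAt0 n (Tf n x) v h0, TfAt1 n x _ (vv n 1 (by omega)), hP,
        dAt0 n v (by omega), hx, h0]
      unfold Px; ring
    · have h1' : v.val = 1 := by omega
      rw [TfAt1 n (Tf n x) v h1', TfAt0 n x _ (vv n 0 (by omega)), hP,
        dAt0 n v (by omega), hx, h1']
      unfold Px; ring
  · rcases Nat.lt_or_ge v.val (n-1) with h3 | h3
    · rw [TfAtMid n hn (Tf n x) v h2 (by omega), TfAtMid n hn x v h2 (by omega), hP,
        dAtMid n hn v h2 (by omega)]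
      unfold Px; ring
    · rcases Nat.eq_or_lt_of_le h3 with h4 | h4
      · rw [TfAtN1 n hn (Tf n x) v h4.symm, TfAtN n hn x _ (vv n n (by omega)), hP,
        dAt0 n v (by omega), hx, ← h4]
        unfold Px; ring
      · have h5 : v.val = n := by omega
        rw [TfAtN n hn (Tf n x) v h5, TfAtN1 n hn x _ (vv n (n-1) (by omega)), hP,
          dAt0 n v (by omega), hx, h5]
        unfold Px; ring

lemma uIter (hn : 5 ≤ n) (c : (Fin (n+1) → ℤ) ≃ₗ[ℤ] (Fin (n+1) → ℤ))
    (hc : ∀ x y : Fin (n+1) → ℤ,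
      eulerForm (n+1) (multDtilde n) x y = - eulerForm (n+1) (multDtilde n) y (c x))
    (x : Fin (n+1) → ℤ) :
    ∀ m, (⇑c)^[m] x ↑(0:ℕ) - (⇑c)^[m] x ↑(1:ℕ)
      = (if Even m then 1 else -1) * (x ↑(0:ℕ) - x ↑(1:ℕ)) := by
  intro m
  induction m with
  | zero => rw [if_pos (by simp)]; simp
  | succ m ih =>
      rw [Function.iterate_succ_apply', cEq n hn c hc ((⇑c)^[m] x)]
      have h0 : (fun v : Fin (n+1) => cAux n ((⇑c)^[m] x) v.val) ↑(0:ℕ)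
          = cAux n ((⇑c)^[m] x) 0 := by simp only; rw [vv n 0 (by omega)]
      have h1 : (fun v : Fin (n+1) => cAux n ((⇑c)^[m] x) v.val) ↑(1:ℕ)
          = cAux n ((⇑c)^[m] x) 1 := by simp only; rw [vv n 1 (by omega)]
      rw [h0, h1, cAux0, cAux1]
      have heven : Even (m+1) ↔ ¬ Even m := Nat.even_add_one
      by_cases he : Even m
      · rw [if_pos he] at ih
        rw [if_neg (by simp [heven, he])]
        linarith [ih]
      · rw [if_neg he] at ih
        rw [if_pos (by simp [heven, he])]
        linarith [ih]

lemma phiIter (hn : 5 ≤ n) (c : (Fin (n+1) → ℤ) ≃ₗ[ℤ] (Fin (n+1) → ℤ))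
    (hc : ∀ x y : Fin (n+1) → ℤ,
      eulerForm (n+1) (multDtilde n) x y = - eulerForm (n+1) (multDtilde n) y (c x))
    (y : Fin (n+1) → ℤ) (r : ℕ) (h1 : 1 ≤ r) (h2 : r ≤ n-3) :
    (⇑c)^[r] y ↑(n-1) + (⇑c)^[r] y ↑n - (⇑c)^[r] y ↑(n-2)
      = (if r ≤ n-4 then y ↑(n-1-r) - y ↑(n-2-r)
         else y ↑(2:ℕ) - y ↑(0:ℕ) - y ↑(1:ℕ)) := by
  rw [iterEq n hn c hc y r (by omega)]
  have Yval : ∀ m : ℕ, m ≤ n →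
      (fun v : Fin (n+1) => Fx n y r v.val) ↑m = Fx n y r m := by
    intro m hm; simp only; rw [vv n m hm]
  rw [Yval (n-1) (by omega), Yval n (by omega), Yval (n-2) (by omega)]
  rw [FxN1 n hn, FxN n hn, FxMid n hn y r (n-2) (by omega) (by omega)]
  rcases Nat.lt_or_ge r (n-3) with h4 | h4
  · have g : Gx n y r = y ↑(n-1-r) - y ↑(n-1) - y ↑n := by
      unfold Gx; rw [if_neg (by omega), if_pos (by omega)]
    by_cases he : Even r
    · rw [if_pos he, if_pos he, if_pos (by omega), if_pos (by omega), g]; ring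
    · rw [if_neg he, if_neg he, if_pos (by omega), if_pos (by omega), g]; ring
  · have hr : r = n-3 := by omega
    subst hr
    have g : Gx n y (n-3) = y ↑(2:ℕ) - y ↑(n-1) - y ↑n := by
      unfold Gx; rw [if_neg (by omega), if_pos (by omega)]
      have e : n-1-(n-3) = 2 := by omega
      rw [e]
    have e0 : n-3+1-(n-2) = 0 := by omega
    by_cases he : Even (n-3)
    · rw [if_pos he, if_pos he, if_neg (by omega), e0, Gx0, if_neg (by omega), g]; ring
    · rw [if_neg he, if_neg he, if_neg (by omega), e0, Gx0, if_neg (by omega), g]; ring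

lemma phiA (hn : 5 ≤ n) (c : (Fin (n+1) → ℤ) ≃ₗ[ℤ] (Fin (n+1) → ℤ))
    (hc : ∀ x y : Fin (n+1) → ℤ,
      eulerForm (n+1) (multDtilde n) x y = - eulerForm (n+1) (multDtilde n) y (c x))
    (b : ℕ) (h1 : 1 ≤ b) (h2 : b ≤ n-3) :
    (⇑c)^[b] (Pi.single ((n-1:ℕ) : Fin (n+1)) 1 : Fin (n+1) → ℤ) ↑(n-1)
      + (⇑c)^[b] (Pi.single ((n-1:ℕ) : Fin (n+1)) 1 : Fin (n+1) → ℤ) ↑n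
      - (⇑c)^[b] (Pi.single ((n-1:ℕ) : Fin (n+1)) 1 : Fin (n+1) → ℤ) ↑(n-2) = 0 := by
  rw [phiIter n hn c hc _ b h1 h2]
  split_ifs with h
  · rw [single_cast n (n-1) (n-1-b) (by omega) (by omega),
      single_cast n (n-1) (n-2-b) (by omega) (by omega),
      if_neg (by omega), if_neg (by omega)]
    ring
  · rw [single_cast n (n-1) 2 (by omega) (by omega),
      single_cast n (n-1) 0 (by omega) (by omega),
      single_cast n (n-1) 1 (by omega) (by omega),
      if_neg (by omega), if_neg (by omega), if_neg (by omega)]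
    ring

lemma PxA (hn : 5 ≤ n) :
    Px n (Pi.single ((n-1:ℕ) : Fin (n+1)) 1 : Fin (n+1) → ℤ) = -1 := by
  unfold Px
  rw [single_cast n (n-1) 0 (by omega) (by omega),
    single_cast n (n-1) 1 (by omega) (by omega),
    single_cast n (n-1) (n-1) (by omega) (by omega),
    single_cast n (n-1) n (by omega) (by omega),
    if_neg (by omega), if_neg (by omega), if_pos rfl, if_neg (by omega)]
  ring

lemma phiTA (hn : 5 ≤ n) (c : (Fin (n+1) → ℤ) ≃ₗ[ℤ] (Fin (n+1) → ℤ))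
    (hc : ∀ x y : Fin (n+1) → ℤ,
      eulerForm (n+1) (multDtilde n) x y = - eulerForm (n+1) (multDtilde n) y (c x))
    (r : ℕ) (h1 : 1 ≤ r) (h2 : r ≤ n-3) :
    (⇑c)^[r] (Tf n (Pi.single ((n-1:ℕ) : Fin (n+1)) 1 : Fin (n+1) → ℤ)) ↑(n-1)
      + (⇑c)^[r] (Tf n (Pi.single ((n-1:ℕ) : Fin (n+1)) 1 : Fin (n+1) → ℤ)) ↑n
      - (⇑c)^[r] (Tf n (Pi.single ((n-1:ℕ) : Fin (n+1)) 1 : Fin (n+1) → ℤ)) ↑(n-2) = 0 := by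
  rw [phiIter n hn c hc _ r h1 h2]
  have hPA := PxA n hn
  split_ifs with h
  · rw [TfAtMid n hn _ ((n-1-r : ℕ) : Fin (n+1))
        (by rw [vv n (n-1-r) (by omega)]; omega) (by rw [vv n (n-1-r) (by omega)]; omega),
      TfAtMid n hn _ ((n-2-r : ℕ) : Fin (n+1))
        (by rw [vv n (n-2-r) (by omega)]; omega) (by rw [vv n (n-2-r) (by omega)]; omega),
      hPA,
      single_cast n (n-1) (n-1-r) (by omega) (by omega),
      single_cast n (n-1) (n-2-r) (by omega) (by omega),
      if_neg (by omega), if_neg (by omega)]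
    ring
  · rw [TfAtMid n hn _ ((2:ℕ) : Fin (n+1))
        (by rw [vv n 2 (by omega)]) (by rw [vv n 2 (by omega)]; omega),
      TfAt0 n _ ((0:ℕ) : Fin (n+1)) (vv n 0 (by omega)),
      TfAt1 n _ ((1:ℕ) : Fin (n+1)) (vv n 1 (by omega)),
      hPA,
      single_cast n (n-1) 2 (by omega) (by omega),
      single_cast n (n-1) 1 (by omega) (by omega),
      single_cast n (n-1) 0 (by omega) (by omega),
      if_neg (by omega), if_neg (by omega), if_neg (by omega)]
    ring

end Stmt6

/-- for odd `n ≥ 5` and the Coxeter transformation `c` of the above quiver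
of type D̃_n (the unique automorphism with `⟨x,y⟩ = −⟨y,c x⟩`), one has
`c^(2n−4) x = x − 2⟨x,δ⟩δ` for all `x`, and `2n−4` is the least positive `b` with
`c^b x − x ∈ ℤδ` for all `x`. -/
theorem stmt_6 (n : ℕ) (hn : 5 ≤ n) (hodd : Odd n)
    (c : (Fin (n+1) → ℤ) ≃ₗ[ℤ] (Fin (n+1) → ℤ))
    (hc : ∀ x y : Fin (n+1) → ℤ,
      eulerForm (n+1) (multDtilde n) x y = - eulerForm (n+1) (multDtilde n) y (c x)) :
    (∀ x : Fin (n+1) → ℤ,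
      (⇑c)^[2*n-4] x
        = x - (2 * eulerForm (n+1) (multDtilde n) x (deltaDtilde n)) • deltaDtilde n) ∧
    IsLeast {b : ℕ | 0 < b ∧ ∀ x : Fin (n+1) → ℤ,
      ∃ t : ℤ, (⇑c)^[b] x - x = t • deltaDtilde n} (2*n-4) := by
  obtain ⟨mo, hmo⟩ := hodd
  have hodd' : Odd n := ⟨mo, hmo⟩
  constructor
  · exact fun x => Stmt6.part1 n hn hodd' c hc x
  · constructor
    · refine ⟨by omega, fun x => ⟨-(2 * eulerForm (n+1) (multDtilde n) x (deltaDtilde n)), ?_⟩⟩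
      rw [Stmt6.part1 n hn hodd' c hc x]
      funext v
      simp only [Pi.sub_apply, Pi.smul_apply, smul_eq_mul]
      ring
    · intro b hb
      obtain ⟨hb0, hball⟩ := hb
      by_contra hlt
      push_neg at hlt
      rcases Nat.even_or_odd b with he | ho
      · obtain ⟨e, hee⟩ := he
        obtain ⟨t, ht⟩ := hball (Pi.single ((n-1:ℕ) : Fin (n+1)) 1)
        have h1 := congrFun ht ((n-1 : ℕ) : Fin (n+1))
        have h2 := congrFun ht ((n : ℕ) : Fin (n+1))
        have h3 := congrFun ht ((n-2 : ℕ) : Fin (n+1))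
        simp only [Pi.sub_apply, Pi.smul_apply, smul_eq_mul] at h1 h2 h3
        rw [Stmt6.deltaVal n (n-1) (by omega), if_pos (by omega),
          Stmt6.single_cast n (n-1) (n-1) (by omega) (by omega), if_pos rfl] at h1
        rw [Stmt6.deltaVal n n (by omega), if_pos (by omega),
          Stmt6.single_cast n (n-1) n (by omega) (by omega), if_neg (by omega)] at h2
        rw [Stmt6.deltaVal n (n-2) (by omega), if_neg (by omega),
          Stmt6.single_cast n (n-1) (n-2) (by omega) (by omega), if_neg (by omega)] at h3
        have hphi : (⇑c)^[b] (Pi.single ((n-1:ℕ) : Fin (n+1)) 1 : Fin (n+1) → ℤ) ↑(n-1)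
            + (⇑c)^[b] (Pi.single ((n-1:ℕ) : Fin (n+1)) 1 : Fin (n+1) → ℤ) ↑n
            - (⇑c)^[b] (Pi.single ((n-1:ℕ) : Fin (n+1)) 1 : Fin (n+1) → ℤ) ↑(n-2) = 0 := by
          rcases Nat.lt_or_ge b (n-2) with hsmall | hbig
          · exact Stmt6.phiA n hn c hc b (by omega) (by omega)
          · obtain ⟨r, hr⟩ : ∃ r, b = r + (n-2) := ⟨b - (n-2), by omega⟩
            subst hr
            rw [Function.iterate_add_apply, Stmt6.half n hn hodd' c hc]
            exact Stmt6.phiTA n hn c hc r (by omega) (by omega)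
        linarith [h1, h2, h3, hphi]
      · obtain ⟨t, ht⟩ := hball (Pi.single ((0:ℕ) : Fin (n+1)) 1)
        have h1 := congrFun ht ((0:ℕ) : Fin (n+1))
        have h2 := congrFun ht ((1:ℕ) : Fin (n+1))
        simp only [Pi.sub_apply, Pi.smul_apply, smul_eq_mul] at h1 h2
        rw [Stmt6.deltaVal n 0 (by omega), if_pos (by omega),
          Stmt6.single_cast n 0 0 (by omega) (by omega), if_pos rfl] at h1
        rw [Stmt6.deltaVal n 1 (by omega), if_pos (by omega),
          Stmt6.single_cast n 0 1 (by omega) (by omega), if_neg (by omega)] at h2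
        have hu := Stmt6.uIter n hn c hc (Pi.single ((0:ℕ) : Fin (n+1)) 1) b
        rw [if_neg (by simpa using Nat.not_even_iff_odd.mpr ho),
          Stmt6.single_cast n 0 0 (by omega) (by omega), if_pos rfl,
          Stmt6.single_cast n 0 1 (by omega) (by omega), if_neg (by omega)] at hu
        linarith [h1, h2, hu]
end

section
/- Let Q be the quiver of type Ẽ_6 with vertex set {1,…,7} and arrows 1→2, 2→7, 3→4, 4→7, 5→6, 6→7. Let δ = α_1 + 2α_2 + α_3 + 2α_4 + α_5 + 2α_6 + 3α_7 ∈ ℤ^7 and let c be the Coxeter transformation of Q. Then c^6(x) = x − ⟨x,δ⟩δ for all x ∈ ℤ^7; moreover 6 is the least positive integer b such that c^b(x) − x ∈ ℤδ for every x ∈ ℤ^7. -/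
set_option maxHeartbeats 1000000

/-- Arrow multiplicities of the quiver of type Ẽ_6 with arrows `1→2, 2→7, 3→4, 4→7, 5→6, 6→7`;
here the vertex labelled `k ∈ {1,…,7}` corresponds to the index `k−1` of `Fin 7`. -/
def multE6 (s t : Fin 7) : ℕ :=
  if (s = 0 ∧ t = 1) ∨ (s = 1 ∧ t = 6) ∨ (s = 2 ∧ t = 3) ∨ (s = 3 ∧ t = 6) ∨
     (s = 4 ∧ t = 5) ∨ (s = 5 ∧ t = 6) then 1 else 0

/-- The radical vector `δ = α₁ + 2α₂ + α₃ + 2α₄ + α₅ + 2α₆ + 3α₇` of Ẽ_6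
(vertex `k` corresponds to index `k−1`). -/
def deltaE6 : Fin 7 → ℤ := ![1, 2, 1, 2, 1, 2, 3]

lemma euler_expand (a b : Fin 7 → ℤ) :
    eulerForm 7 multE6 a b =
      a 0 * b 0 + a 1 * b 1 + a 2 * b 2 + a 3 * b 3 + a 4 * b 4 + a 5 * b 5 + a 6 * b 6
      - (a 1 * b 0 + a 6 * b 1 + a 3 * b 2 + a 6 * b 3 + a 5 * b 4 + a 6 * b 5) := by
  simp [eulerForm, multE6, Fin.sum_univ_seven]

/-- The explicit Coxeter transformation of the Ẽ_6 quiver. -/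
def coxC (x : Fin 7 → ℤ) : Fin 7 → ℤ :=
  ![x 1 - x 0, x 6 - x 0, x 3 - x 2, x 6 - x 2, x 5 - x 4, x 6 - x 4,
    2 * x 6 - x 0 - x 2 - x 4]

lemma coxC_0 (x : Fin 7 → ℤ) : coxC x 0 = x 1 - x 0 := rfl
lemma coxC_1 (x : Fin 7 → ℤ) : coxC x 1 = x 6 - x 0 := rfl
lemma coxC_2 (x : Fin 7 → ℤ) : coxC x 2 = x 3 - x 2 := rfl
lemma coxC_3 (x : Fin 7 → ℤ) : coxC x 3 = x 6 - x 2 := rfl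
lemma coxC_4 (x : Fin 7 → ℤ) : coxC x 4 = x 5 - x 4 := rfl
lemma coxC_5 (x : Fin 7 → ℤ) : coxC x 5 = x 6 - x 4 := rfl
lemma coxC_6 (x : Fin 7 → ℤ) : coxC x 6 = 2 * x 6 - x 0 - x 2 - x 4 := rfl

lemma delta_0 : deltaE6 0 = 1 := rfl
lemma delta_1 : deltaE6 1 = 2 := rfl
lemma delta_2 : deltaE6 2 = 1 := rfl
lemma delta_3 : deltaE6 3 = 2 := rfl
lemma delta_4 : deltaE6 4 = 1 := rfl
lemma delta_5 : deltaE6 5 = 2 := rfl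
lemma delta_6 : deltaE6 6 = 3 := rfl

lemma coxC_six (x : Fin 7 → ℤ) :
    coxC (coxC (coxC (coxC (coxC (coxC x))))) =
      x - eulerForm 7 multE6 x deltaE6 • deltaE6 := by
  funext i
  fin_cases i <;>
    simp only [Fin.isValue, Fin.zero_eta, Fin.mk_one, show (⟨2,by norm_num⟩ : Fin 7) = 2 from rfl,
      show (⟨3,by norm_num⟩ : Fin 7) = 3 from rfl, show (⟨4,by norm_num⟩ : Fin 7) = 4 from rfl,
      show (⟨5,by norm_num⟩ : Fin 7) = 5 from rfl, show (⟨6,by norm_num⟩ : Fin 7) = 6 from rfl,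
      coxC_0, coxC_1, coxC_2, coxC_3, coxC_4, coxC_5, coxC_6,
      delta_0, delta_1, delta_2, delta_3, delta_4, delta_5, delta_6,
      euler_expand, Pi.sub_apply, Pi.smul_apply, smul_eq_mul] <;> ring

/-- for the Coxeter transformation `c` of the above quiver of type Ẽ_6
(the unique automorphism with `⟨x,y⟩ = −⟨y,c x⟩`), one has `c^6 x = x − ⟨x,δ⟩δ` for all
`x ∈ ℤ^7`, and `6` is the least positive `b` with `c^b x − x ∈ ℤδ` for all `x`. -/
theorem stmt_7 (c : (Fin 7 → ℤ) ≃ₗ[ℤ] (Fin 7 → ℤ))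
    (hc : ∀ x y : Fin 7 → ℤ, eulerForm 7 multE6 x y = - eulerForm 7 multE6 y (c x)) :
    (∀ x : Fin 7 → ℤ, (⇑c)^[6] x = x - eulerForm 7 multE6 x deltaE6 • deltaE6) ∧
    IsLeast {b : ℕ | 0 < b ∧ ∀ x : Fin 7 → ℤ,
      ∃ t : ℤ, (⇑c)^[b] x - x = t • deltaE6} 6 := by
  have hC : ∀ x : Fin 7 → ℤ, c x = coxC x := by
    intro x
    have h0 := hc x (fun k => if k = 0 then 1 else 0)
    have h1 := hc x (fun k => if k = 1 then 1 else 0)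
    have h2 := hc x (fun k => if k = 2 then 1 else 0)
    have h3 := hc x (fun k => if k = 3 then 1 else 0)
    have h4 := hc x (fun k => if k = 4 then 1 else 0)
    have h5 := hc x (fun k => if k = 5 then 1 else 0)
    have h6 := hc x (fun k => if k = 6 then 1 else 0)
    simp only [euler_expand] at h0 h1 h2 h3 h4 h5 h6
    simp at h0 h1 h2 h3 h4 h5 h6
    funext i
    fin_cases i <;>
      simp only [Fin.isValue, Fin.zero_eta, Fin.mk_one,
        show (⟨2,by norm_num⟩ : Fin 7) = 2 from rfl,
        show (⟨3,by norm_num⟩ : Fin 7) = 3 from rfl, show (⟨4,by norm_num⟩ : Fin 7) = 4 from rfl,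
        show (⟨5,by norm_num⟩ : Fin 7) = 5 from rfl, show (⟨6,by norm_num⟩ : Fin 7) = 6 from rfl,
        coxC_0, coxC_1, coxC_2, coxC_3, coxC_4, coxC_5, coxC_6] <;> linarith
  have hsix : ∀ x : Fin 7 → ℤ, (⇑c)^[6] x = x - eulerForm 7 multE6 x deltaE6 • deltaE6 := by
    intro x
    have h : (⇑c)^[6] x = coxC (coxC (coxC (coxC (coxC (coxC x))))) := by
      simp only [Function.iterate_succ_apply', Function.iterate_zero_apply, hC]
    rw [h, coxC_six]
  refine ⟨hsix, ⟨⟨by norm_num, fun x => ?_⟩, ?_⟩⟩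
  · exact ⟨-eulerForm 7 multE6 x deltaE6, by rw [hsix x, sub_sub_cancel_left, ← neg_smul]⟩
  · rintro b ⟨hb, hall⟩
    by_contra hlt
    push_neg at hlt
    interval_cases b <;>
    · obtain ⟨t, ht⟩ := hall (fun k => if k = 0 then 1 else 0)
      simp only [Function.iterate_succ_apply', Function.iterate_zero_apply, hC] at ht
      have e0 := congrFun ht 0
      have e1 := congrFun ht 1
      have e2 := congrFun ht 2
      simp only [coxC_0, coxC_1, coxC_2, coxC_3, coxC_4, coxC_5, coxC_6,
        delta_0, delta_1, delta_2, Pi.sub_apply, Pi.smul_apply, smul_eq_mul] at e0 e1 e2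
      simp at e0 e1 e2
      omega
end

section
/- Let p ≥ q ≥ 1 and let Q be the quiver of type Ã_{p,q} with vertex set {0,1,…,p+q−1} and arrows i→i−1 for 1 ≤ i ≤ q, i→i+1 for q ≤ i ≤ p+q−2, and (p+q−1)→0. Let δ = (1,1,…,1) ∈ ℤ^{p+q} and let c be the Coxeter transformation of Q. Then c^{lcm(p,q)}(x) = x − m⟨x,δ⟩δ for all x ∈ ℤ^{p+q}, where m = lcm(p,q)/p + lcm(p,q)/q (which equals the additive order of the residue class of q in ℤ/(p+q)ℤ); moreover lcm(p,q) is the least positive integer b such that c^b(x) − x ∈ ℤδ for every x ∈ ℤ^{p+q}. -/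
set_option linter.unusedSectionVars false
set_option maxHeartbeats 1000000

/-- Arrow multiplicities of the quiver of type Ã_{p,q} on vertices `{0,…,p+q−1}` with arrows
`i → i−1` for `1 ≤ i ≤ q`, `i → i+1` for `q ≤ i ≤ p+q−2` and `(p+q−1) → 0`. -/
def multAtilde (p q : ℕ) (s t : Fin (p+q)) : ℕ :=
  (if 1 ≤ s.val ∧ s.val ≤ q ∧ t.val + 1 = s.val then 1 else 0) +
  (if q ≤ s.val ∧ s.val ≤ p + q - 2 ∧ t.val = s.val + 1 then 1 else 0) +
  (if s.val = p + q - 1 ∧ t.val = 0 then 1 else 0)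

/-- The radical vector `δ = (1,…,1)` of Ã_{p,q}. -/
def deltaAtilde (N : ℕ) : Fin N → ℤ := fun _ => 1

namespace Stmt10

/-- index builder, `idx i = i mod n` as an element of `Fin n`. -/
def idx {n : ℕ} [NeZero n] (i : ℕ) : Fin n := ⟨i % n, Nat.mod_lt _ (Nat.pos_of_neZero n)⟩

@[simp] lemma idx_val {n : ℕ} [NeZero n] (i : ℕ) : (idx (n := n) i).val = i % n := rfl

lemma idx_congr {n : ℕ} [NeZero n] {i j : ℕ} (h : i % n = j % n) :
    (idx (n := n) i) = idx j := Fin.ext h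

lemma idx_self {n : ℕ} [NeZero n] (u : Fin n) : idx u.val = u :=
  Fin.ext (Nat.mod_eq_of_lt u.isLt)

/-- standard basis vector -/
def std {n : ℕ} (u : Fin n) : Fin n → ℤ := fun v => if v = u then 1 else 0

/-- cyclic difference functional `x_i - x_{i-1}`. -/
def Dd {n : ℕ} [NeZero n] (i : ℕ) (x : Fin n → ℤ) : ℤ := x (idx i) - x (idx (i + (n-1)))

lemma Dd_congr {n : ℕ} [NeZero n] {i j : ℕ} (h : i % n = j % n) (x : Fin n → ℤ) :
    Dd i x = Dd j x := by
  have hn : 0 < n := Nat.pos_of_neZero n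
  unfold Dd
  rw [idx_congr h, idx_congr (show (i + (n-1)) % n = (j + (n-1)) % n by
    rw [Nat.add_mod, h, ← Nat.add_mod])]

lemma Dd_apply {n : ℕ} [NeZero n] {i j : ℕ} (h1 : 1 ≤ i) (hj : j = i - 1) (x : Fin n → ℤ) :
    Dd i x = x (idx i) - x (idx j) := by
  have hn : 1 ≤ n := Nat.pos_of_neZero n
  unfold Dd
  rw [idx_congr (show (i + (n-1)) % n = j % n by
    rw [show i + (n-1) = j + n by omega, Nat.add_mod_right])]

section PQ

variable (p q : ℕ)

/-- explicit Coxeter transformation of `Ã_{p,q}`. -/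
def cFun [NeZero (p+q)] (x : Fin (p+q) → ℤ) : Fin (p+q) → ℤ := fun t =>
  if t.val = 0 then x (idx 0) + x (idx (q-1)) - 2 * x (idx q) + x (idx (q+1))
  else if t.val < q then x (idx (t.val - 1)) + x (idx (q+1)) - x (idx q)
  else x (idx (q-1)) - x (idx q) + x (idx (t.val + 1))

/-- the inner sum `∑_{arrows s→t} a_t` of the Euler form. -/
def Mfun [NeZero (p+q)] (a : Fin (p+q) → ℤ) (s : Fin (p+q)) : ℤ :=
  (if 1 ≤ s.val ∧ s.val ≤ q then a (idx (s.val - 1)) else 0) +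
  (if q ≤ s.val ∧ s.val ≤ p + q - 2 then a (idx (s.val + 1)) else 0) +
  (if s.val = p + q - 1 then a (idx 0) else 0)

/-- `⟨std u, z⟩` as a functional of `z`. -/
def Gfun [NeZero (p+q)] (z : Fin (p+q) → ℤ) (u : Fin (p+q)) : ℤ :=
  z u - (if u.val + 1 ≤ q then z (idx (u.val + 1)) else 0)
      - (if q + 1 ≤ u.val then z (idx (u.val - 1)) else 0)
      - (if u.val = 0 then z (idx (p + q - 1)) else 0)

/-- parametrization of the `q`-cycle `{1,…,q}`. -/
def jq (a : ZMod q) : ℕ := a.val + 1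

/-- parametrization of the `p`-cycle `{0, q+1, …, p+q-1}`. -/
def jp (b : ZMod p) : ℕ := if b.val = 0 then 0 else q + b.val

end PQ

section Main

variable {p q : ℕ} (hq : 1 ≤ q) (hpq : q ≤ p) [NeZero (p+q)] [NeZero p] [NeZero q]

lemma sum_ite_val {n : ℕ} [NeZero n] (e : ℕ) (he : e < n) (X : Fin n → ℤ) :
    ∑ t : Fin n, (if t.val = e then X t else 0) = X (idx e) := by
  rw [Finset.sum_eq_single (idx e)]
  · simp [Nat.mod_eq_of_lt he]
  · intro b _ hb
    have : ¬ b.val = e := by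
      intro h; exact hb (by rw [← idx_self b]; exact idx_congr (by simp [h, Nat.mod_eq_of_lt he]))
    simp [this]
  · simp

lemma sum_indicator_eq {n : ℕ} [NeZero n] (e : ℕ) (he : e < n) (X : Fin n → ℤ) :
    ∑ t : Fin n, (if t.val = e then (1:ℤ) else 0) * X t = X (idx e) := by
  rw [← sum_ite_val e he X]
  exact Finset.sum_congr rfl (fun t _ => by split_ifs <;> ring)

lemma sum_indicator_eq' {n : ℕ} [NeZero n] (e : ℕ) (P : Prop) [Decidable P] (he : P → e < n)
    (X : Fin n → ℤ) :
    ∑ t : Fin n, (if t.val = e ∧ P then (1:ℤ) else 0) * X t = if P then X (idx e) else 0 := by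
  by_cases hP : P
  · simp only [hP, and_true, if_pos hP]; exact sum_indicator_eq e (he hP) X
  · simp [hP]

lemma sum_mul_std {n : ℕ} (u : Fin n) (f : Fin n → ℤ) : ∑ v, f v * std u v = f u := by
  simp [std, mul_ite]

lemma sum_std_mul {n : ℕ} (u : Fin n) (f : Fin n → ℤ) : ∑ v, std u v * f v = f u := by
  simp [std, ite_mul]

include hq hpq in
lemma euler_eq (a b : Fin (p+q) → ℤ) :
    eulerForm (p+q) (multAtilde p q) a b
      = (∑ v, a v * b v) - ∑ s, Mfun p q a s * b s := by
  unfold eulerForm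
  congr 1
  refine Finset.sum_congr rfl (fun s _ => ?_)
  have hs := s.isLt
  have hsplit : ∀ t : Fin (p+q), (multAtilde p q s t : ℤ) * (a t * b s)
      = (if t.val = s.val - 1 ∧ (1 ≤ s.val ∧ s.val ≤ q) then (1:ℤ) else 0) * (a t * b s)
      + (if t.val = s.val + 1 ∧ (q ≤ s.val ∧ s.val ≤ p+q-2) then (1:ℤ) else 0) * (a t * b s)
      + (if t.val = 0 ∧ s.val = p+q-1 then (1:ℤ) else 0) * (a t * b s) := by
    intro t
    have ht := t.isLt
    unfold multAtilde
    push_cast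
    split_ifs <;> first | (exfalso; omega) | ring
  rw [Finset.sum_congr rfl (fun t _ => hsplit t), Finset.sum_add_distrib,
    Finset.sum_add_distrib]
  rw [sum_indicator_eq' (s.val - 1) _ (fun h => by omega) (fun t => a t * b s),
    sum_indicator_eq' (s.val + 1) _ (fun h => by omega) (fun t => a t * b s),
    sum_indicator_eq' 0 _ (fun _ => by omega) (fun t => a t * b s)]
  unfold Mfun
  split_ifs <;> ring

include hq hpq in
lemma euler_std_right (x : Fin (p+q) → ℤ) (u : Fin (p+q)) :
    eulerForm (p+q) (multAtilde p q) x (std u) = x u - Mfun p q x u := by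
  rw [euler_eq hq hpq, sum_mul_std u x, sum_mul_std u (Mfun p q x)]

include hq hpq in
lemma euler_std_left (z : Fin (p+q) → ℤ) (u : Fin (p+q)) :
    eulerForm (p+q) (multAtilde p q) (std u) z = Gfun p q z u := by
  rw [euler_eq hq hpq, sum_std_mul u z]
  have hu := u.isLt
  have key : ∀ s : Fin (p+q), Mfun p q (std u) s * z s
      = (if s.val = u.val + 1 ∧ u.val + 1 ≤ q then (1:ℤ) else 0) * z s
      + (if s.val = u.val - 1 ∧ q + 1 ≤ u.val then (1:ℤ) else 0) * z s
      + (if s.val = p+q-1 ∧ u.val = 0 then (1:ℤ) else 0) * z s := by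
    intro s
    have hs := s.isLt
    unfold Mfun std
    simp only [Fin.ext_iff, idx_val, Nat.zero_mod]
    have hA : (s.val - 1) % (p+q) = s.val - 1 := Nat.mod_eq_of_lt (by omega)
    have hB : (s.val + 1) % (p+q) = s.val + 1 ∨ (s.val + 1 = p+q ∧ (s.val + 1) % (p+q) = 0) := by
      rcases Nat.lt_or_ge (s.val+1) (p+q) with h | h
      · exact Or.inl (Nat.mod_eq_of_lt h)
      · exact Or.inr ⟨by omega, by rw [show s.val + 1 = p+q by omega, Nat.mod_self]⟩
    rw [hA]
    split_ifs <;> first | (exfalso; omega) | ring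
  rw [Finset.sum_congr rfl (fun s _ => key s), Finset.sum_add_distrib, Finset.sum_add_distrib,
    sum_indicator_eq' _ _ (fun h => by omega) z,
    sum_indicator_eq' _ _ (fun h => by omega) z,
    sum_indicator_eq' _ _ (fun _ => by omega) z]
  unfold Gfun
  split_ifs <;> ring

lemma sum_shift {f : ℕ → ℤ} {a m N : ℕ} (h : a + m < N) :
    ∑ i ∈ Finset.range N, (if a + 1 ≤ i ∧ i ≤ a + m then f i else 0)
      = ∑ j ∈ Finset.range m, f (a+1+j) := by
  induction m with
  | zero =>
    rw [Finset.range_zero, Finset.sum_empty]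
    exact Finset.sum_eq_zero (fun i _ => by rw [if_neg (by omega)])
  | succ m ih =>
    rw [Finset.sum_range_succ, ← ih (by omega)]
    have key : ∀ i ∈ Finset.range N, (if a+1 ≤ i ∧ i ≤ a+(m+1) then f i else 0)
        = (if a+1 ≤ i ∧ i ≤ a+m then f i else 0) + (if i = a+m+1 then f i else 0) := by
      intro i _; split_ifs <;> first | (exfalso; omega) | ring
    rw [Finset.sum_congr rfl key, Finset.sum_add_distrib,
      Finset.sum_ite_eq' (Finset.range N) (a+m+1) f,
      if_pos (Finset.mem_range.mpr (by omega))]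
    congr 2
    omega

include hq hpq in
lemma euler_delta (x : Fin (p+q) → ℤ) :
    eulerForm (p+q) (multAtilde p q) x (deltaAtilde (p+q)) = x (idx q) - x (idx 0) := by
  have hp : 1 ≤ p := le_trans hq hpq
  rw [euler_eq hq hpq]
  unfold deltaAtilde Mfun
  simp only [mul_one]
  have e1 : ∑ v : Fin (p+q), x v = ∑ i ∈ Finset.range (p+q), x (idx i) := by
    rw [← Fin.sum_univ_eq_sum_range (fun i => x (idx i)) (p+q)]
    exact Finset.sum_congr rfl (fun v _ => by rw [idx_self])
  have e2 : ∑ s : Fin (p+q),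
      ((if 1 ≤ s.val ∧ s.val ≤ q then x (idx (s.val - 1)) else 0) +
       (if q ≤ s.val ∧ s.val ≤ p + q - 2 then x (idx (s.val + 1)) else 0) +
       (if s.val = p + q - 1 then x (idx 0) else 0))
      = ∑ i ∈ Finset.range (p+q),
      ((if 1 ≤ i ∧ i ≤ q then x (idx (i - 1)) else 0) +
       (if q ≤ i ∧ i ≤ p + q - 2 then x (idx (i + 1)) else 0) +
       (if i = p + q - 1 then x (idx 0) else 0)) := by
    rw [← Fin.sum_univ_eq_sum_range]
  rw [e1, e2, Finset.sum_add_distrib, Finset.sum_add_distrib]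
  have t1 : ∑ i ∈ Finset.range (p+q), (if 1 ≤ i ∧ i ≤ q then x (idx (i-1)) else 0)
      = ∑ j ∈ Finset.range q, x (idx j) := by
    have := sum_shift (f := fun i => x (idx (i-1))) (a := 0) (m := q) (N := p+q) (by omega)
    simp only [Nat.zero_add] at this
    rw [this]
    exact Finset.sum_congr rfl (fun j _ => by norm_num)
  have t2 : ∑ i ∈ Finset.range (p+q), (if q ≤ i ∧ i ≤ p+q-2 then x (idx (i+1)) else 0)
      = ∑ j ∈ Finset.range (p-1), x (idx (q+1+j)) := by
    have h0 : ∀ i ∈ Finset.range (p+q), (if q ≤ i ∧ i ≤ p+q-2 then x (idx (i+1)) else 0)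
        = (if (q-1) + 1 ≤ i ∧ i ≤ (q-1) + (p-1) then x (idx (i+1)) else 0) := by
      intro i _
      have : (q ≤ i ∧ i ≤ p+q-2) ↔ ((q-1)+1 ≤ i ∧ i ≤ (q-1)+(p-1)) := by omega
      rw [if_congr this rfl rfl]
    rw [Finset.sum_congr rfl h0,
      sum_shift (f := fun i => x (idx (i+1))) (a := q-1) (m := p-1) (N := p+q) (by omega)]
    exact Finset.sum_congr rfl (fun j _ => by
      rw [show (q-1)+1+j+1 = q+1+j by omega])
  have t3 : ∑ i ∈ Finset.range (p+q), (if i = p+q-1 then x (idx 0) else 0)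
      = x (idx 0) := by
    rw [Finset.sum_ite_eq' (Finset.range (p+q)) (p+q-1) (fun _ => x (idx 0)),
      if_pos (Finset.mem_range.mpr (by omega))]
  rw [t1, t2, t3]
  have split1 : ∑ i ∈ Finset.range (p+q), x (idx i)
      = (∑ i ∈ Finset.range q, x (idx i) + x (idx q))
        + ∑ j ∈ Finset.range (p-1), x (idx (q+1+j)) := by
    have := Finset.sum_range_add (fun i => x (idx i)) (q+1) (p-1)
    rw [show q+1+(p-1) = p+q by omega] at this
    rw [this, Finset.sum_range_succ]
  rw [split1]
  ring

-- evaluation lemmas for cFun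
lemma cFun_at0 (x : Fin (p+q) → ℤ) :
    cFun p q x (idx 0) = x (idx 0) + x (idx (q-1)) - 2 * x (idx q) + x (idx (q+1)) := by
  unfold cFun
  rw [if_pos (show (idx (n := p+q) 0).val = 0 by simp)]

include hq hpq in
lemma cFun_mid (x : Fin (p+q) → ℤ) {i j : ℕ} (h1 : 1 ≤ i) (h2 : i ≤ q)
    (hj : j % (p+q) = (i-1) % (p+q)) :
    cFun p q x (idx i) = x (idx j) + x (idx (q+1)) - x (idx q) := by
  have hp : 1 ≤ p := le_trans hq hpq
  have hi : (idx (n := p+q) i).val = i := by simp [Nat.mod_eq_of_lt (show i < p+q by omega)]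
  have hx : x (idx (n := p+q) j) = x (idx (i-1)) := congrArg x (idx_congr hj)
  unfold cFun
  rw [hi, if_neg (by omega)]
  by_cases h : i < q
  · rw [if_pos h, hx]
  · rw [if_neg h, hx, show i = q by omega]
    ring

include hq hpq in
lemma cFun_high (x : Fin (p+q) → ℤ) {i j : ℕ} (h1 : q ≤ i) (h2 : i < p+q)
    (hj : j % (p+q) = (i+1) % (p+q)) :
    cFun p q x (idx i) = x (idx (q-1)) - x (idx q) + x (idx j) := by
  have hi : (idx (n := p+q) i).val = i := by simp [Nat.mod_eq_of_lt h2]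
  unfold cFun
  rw [hi, if_neg (by omega), if_neg (by omega),
    show x (idx (n := p+q) (i+1)) = x (idx j) from congrArg x (idx_congr hj.symm)]

-- the defining property
include hq hpq in
lemma star_cFun (x : Fin (p+q) → ℤ) (u : Fin (p+q)) :
    Gfun p q (cFun p q x) u = -(x u - Mfun p q x u) := by
  have hp : 1 ≤ p := le_trans hq hpq
  obtain ⟨k, hkn, rfl⟩ : ∃ k, k < p + q ∧ u = idx k := ⟨u.val, u.isLt, (idx_self u).symm⟩
  have hkv : (idx (n := p+q) k).val = k := by simp [Nat.mod_eq_of_lt hkn]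
  have mod0 : ∀ a : ℕ, a = p + q → 0 % (p+q) = a % (p+q) := by
    intro a ha; rw [ha, Nat.mod_self, Nat.zero_mod]
  have modc : ∀ a b : ℕ, a = b → a % (p+q) = b % (p+q) := fun a b hab => by rw [hab]
  unfold Gfun Mfun
  rw [hkv]
  rcases (by omega :
      k = 0 ∨ (1 ≤ k ∧ k < q) ∨ k = q ∨ (q+1 ≤ k ∧ k ≤ p+q-2) ∨ (k = p+q-1 ∧ q+1 ≤ k))
    with h | h | h | h | h
  · rw [h]
    rw [if_pos (show 0+1 ≤ q by omega), if_neg (show ¬ q+1 ≤ 0 by omega), if_pos rfl,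
      if_neg (show ¬ (1 ≤ 0 ∧ 0 ≤ q) by omega), if_neg (show ¬ (q ≤ 0 ∧ 0 ≤ p+q-2) by omega),
      if_neg (show ¬ (0 = p+q-1) by omega),
      cFun_at0, cFun_mid hq hpq x (i := 0+1) (j := 0) le_rfl (by omega) (modc _ _ (by omega)),
      cFun_high hq hpq x (i := p+q-1) (j := 0) (by omega) (by omega) (mod0 _ (by omega))]
    ring
  · rw [if_pos (show k+1 ≤ q by omega), if_neg (show ¬ q+1 ≤ k by omega),
      if_neg (show ¬ k = 0 by omega),
      if_pos (show 1 ≤ k ∧ k ≤ q by omega), if_neg (show ¬ (q ≤ k ∧ k ≤ p+q-2) by omega),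
      if_neg (show ¬ k = p+q-1 by omega),
      cFun_mid hq hpq x (i := k) (j := k-1) (by omega) (by omega) rfl,
      cFun_mid hq hpq x (i := k+1) (j := k) (by omega) (by omega) (modc _ _ (by omega))]
    ring
  · rw [h]
    rw [if_neg (show ¬ q+1 ≤ q by omega), if_neg (show ¬ q+1 ≤ q by omega),
      if_neg (show ¬ q = 0 by omega), if_pos (show 1 ≤ q ∧ q ≤ q by omega)]
    by_cases hp2 : q ≤ p+q-2
    · rw [if_pos (show q ≤ q ∧ q ≤ p+q-2 by omega), if_neg (show ¬ q = p+q-1 by omega),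
        cFun_high hq hpq x (i := q) (j := q+1) le_rfl (by omega) rfl]
      ring
    · rw [if_neg (show ¬ (q ≤ q ∧ q ≤ p+q-2) by omega), if_pos (show q = p+q-1 by omega),
        cFun_high hq hpq x (i := q) (j := 0) le_rfl (by omega) (mod0 _ (by omega))]
      ring
  · rw [if_neg (show ¬ k+1 ≤ q by omega), if_pos (show q+1 ≤ k by omega),
      if_neg (show ¬ k = 0 by omega),
      if_neg (show ¬ (1 ≤ k ∧ k ≤ q) by omega), if_pos (show q ≤ k ∧ k ≤ p+q-2 by omega),
      if_neg (show ¬ k = p+q-1 by omega),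
      cFun_high hq hpq x (i := k) (j := k+1) (by omega) (by omega) rfl,
      cFun_high hq hpq x (i := k-1) (j := k) (by omega) (by omega) (modc _ _ (by omega))]
    ring
  · obtain ⟨h5, h5'⟩ := h
    rw [if_neg (show ¬ k+1 ≤ q by omega), if_pos (show q+1 ≤ k by omega),
      if_neg (show ¬ k = 0 by omega),
      if_neg (show ¬ (1 ≤ k ∧ k ≤ q) by omega), if_neg (show ¬ (q ≤ k ∧ k ≤ p+q-2) by omega),
      if_pos h5,
      cFun_high hq hpq x (i := k) (j := 0) (by omega) (by omega) (mod0 _ (by omega)),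
      cFun_high hq hpq x (i := k-1) (j := k) (by omega) (by omega) (modc _ _ (by omega))]
    ring

lemma Gfun_sub (y z : Fin (p+q) → ℤ) (u : Fin (p+q)) :
    Gfun p q (fun v => y v - z v) u = Gfun p q y u - Gfun p q z u := by
  unfold Gfun; split_ifs <;> ring

include hq hpq in
lemma Gfun_inj (w : Fin (p+q) → ℤ) (hw : ∀ u, Gfun p q w u = 0) : w = 0 := by
  have hp : 1 ≤ p := le_trans hq hpq
  have hval : ∀ k, k < p + q → (idx (n := p+q) k).val = k :=
    fun k hk => by simp [Nat.mod_eq_of_lt hk]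
  have hF : ∀ k, k < p + q → Gfun p q w (idx k) = 0 := fun k _ => hw (idx k)
  have F1 : w (idx q) = 0 := by
    have := hF q (by omega)
    unfold Gfun at this
    rw [hval q (by omega), if_neg (show ¬ q+1 ≤ q by omega),
      if_neg (show ¬ q+1 ≤ q by omega), if_neg (show ¬ q = 0 by omega)] at this
    linarith
  have F2 : ∀ k, 1 ≤ k → k < q → w (idx k) = w (idx (k+1)) := by
    intro k h1 h2
    have := hF k (by omega)
    unfold Gfun at this
    rw [hval k (by omega), if_pos (show k+1 ≤ q by omega),
      if_neg (show ¬ q+1 ≤ k by omega), if_neg (show ¬ k = 0 by omega)] at this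
    linarith
  have F3 : ∀ k, q+1 ≤ k → k < p+q → w (idx k) = w (idx (k-1)) := by
    intro k h1 h2
    have := hF k (by omega)
    unfold Gfun at this
    rw [hval k (by omega), if_neg (show ¬ k+1 ≤ q by omega),
      if_pos (show q+1 ≤ k by omega), if_neg (show ¬ k = 0 by omega)] at this
    linarith
  have F4 : w (idx 0) = w (idx (0+1)) + w (idx (p+q-1)) := by
    have := hF 0 (by omega)
    unfold Gfun at this
    rw [hval 0 (by omega), if_pos (show 0+1 ≤ q by omega),
      if_neg (show ¬ q+1 ≤ 0 by omega), if_pos rfl] at this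
    linarith
  have A : ∀ j, j < q → w (idx (q - j)) = 0 := by
    intro j
    induction j with
    | zero => intro _; exact F1
    | succ j ih =>
      intro hj
      have h2 := F2 (q-(j+1)) (by omega) (by omega)
      rw [show q-(j+1)+1 = q-j by omega] at h2
      rw [h2]
      exact ih (by omega)
  have B : ∀ j, j < p → w (idx (q + j)) = 0 := by
    intro j
    induction j with
    | zero => exact fun _ => F1
    | succ j ih =>
      intro hj
      have h3 := F3 (q+(j+1)) (by omega) (by omega)
      rw [show q+(j+1)-1 = q+j by omega] at h3
      rw [h3]
      exact ih (by omega)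
  funext v
  show w v = 0
  rw [← idx_self v]
  rcases (by omega : v.val = 0 ∨ (1 ≤ v.val ∧ v.val ≤ q) ∨ (q+1 ≤ v.val ∧ v.val < p+q))
    with h | h | h
  · rw [h, F4]
    have a1 : w (idx (n := p+q) (0+1)) = 0 := by
      have := A (q-1) (by omega); rwa [show q-(q-1) = 0+1 by omega] at this
    have b1 : w (idx (n := p+q) (p+q-1)) = 0 := by
      have := B (p-1) (by omega); rwa [show q+(p-1) = p+q-1 by omega] at this
    rw [a1, b1]; ring
  · have := A (q - v.val) (by omega)
    rwa [show q-(q-v.val) = v.val by omega] at this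
  · have := B (v.val - q) (by omega)
    rwa [show q+(v.val-q) = v.val by omega] at this

variable (c : (Fin (p+q) → ℤ) ≃ₗ[ℤ] (Fin (p+q) → ℤ))
  (hc : ∀ x y : Fin (p+q) → ℤ,
      eulerForm (p+q) (multAtilde p q) x y = - eulerForm (p+q) (multAtilde p q) y (c x))

include hq hpq hc in
lemma c_eq : ⇑c = cFun p q := by
  funext x
  have key : ∀ u, Gfun p q (fun w => c x w - cFun p q x w) u = 0 := by
    intro u
    rw [Gfun_sub]
    have h1 := hc x (std u)
    rw [euler_std_right hq hpq, euler_std_left hq hpq] at h1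
    rw [star_cFun hq hpq x u]
    linarith
  have h0 := Gfun_inj hq hpq _ key
  funext v
  have := congrFun h0 v
  simp only [Pi.zero_apply, sub_eq_zero] at this
  exact this

-- cycle lemmas
include hq hpq in
lemma Lq (x : Fin (p+q) → ℤ) {i : ℕ} (h1 : 1 ≤ i) (h2 : i < q) :
    Dd (i+1) (cFun p q x) = Dd i x := by
  rw [Dd_apply (by omega) (show i = i+1-1 by omega), Dd_apply h1 rfl,
    cFun_mid hq hpq x (i := i+1) (j := i) (by omega) (by omega) (by rw [show i+1-1 = i by omega]),
    cFun_mid hq hpq x (i := i) (j := i-1) (by omega) (by omega) rfl]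
  ring

include hq hpq in
lemma Lq1 (x : Fin (p+q) → ℤ) : Dd 1 (cFun p q x) = Dd q x := by
  rw [Dd_apply le_rfl rfl, Dd_apply hq rfl, show (1:ℕ)-1 = 0 from rfl,
    cFun_mid hq hpq x (i := 1) (j := 0) le_rfl hq rfl,
    cFun_at0]
  ring

include hq hpq in
lemma Lp (x : Fin (p+q) → ℤ) {j : ℕ} (h1 : 1 ≤ j) (h2 : j ≤ p - 1) :
    Dd (q+j) (cFun p q x) = Dd (q+j+1) x := by
  have hp : 1 ≤ p := le_trans hq hpq
  rw [Dd_apply (by omega) (show q+j-1 = q+j-1 from rfl), Dd_apply (by omega) (show q+j = q+j+1-1 by omega),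
    cFun_high hq hpq x (i := q+j) (j := q+j+1) (by omega) (by omega) rfl,
    cFun_high hq hpq x (i := q+j-1) (j := q+j) (by omega) (by omega)
      (by rw [show q+j-1+1 = q+j by omega])]
  ring

include hq hpq in
lemma Lp0 (x : Fin (p+q) → ℤ) : Dd 0 (cFun p q x) = Dd (q+1) x := by
  have hp : 1 ≤ p := le_trans hq hpq
  unfold Dd
  rw [idx_congr (show (0 + (p+q-1)) % (p+q) = (p+q-1) % (p+q) by rw [Nat.zero_add]),
    cFun_at0,
    cFun_high hq hpq x (i := p+q-1) (j := 0) (by omega) (by omega)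
      (by rw [Nat.zero_mod, show p+q-1+1 = p+q by omega, Nat.mod_self]),
    idx_congr (show (q+1 + (p+q-1)) % (p+q) = q % (p+q) by
      rw [show q+1+(p+q-1) = q + (p+q) by omega, Nat.add_mod_right])]
  ring

include hq hpq in
lemma Phi0 (x : Fin (p+q) → ℤ) :
    cFun p q x (idx 0) = x (idx 0) - Dd q x + Dd (q+1) x := by
  rw [cFun_at0, Dd_apply hq rfl, Dd_apply (by omega) (show q = q+1-1 by omega)]
  ring

lemma cast_sub_one {r : ℕ} [NeZero r] (hr : 1 ≤ r) : ((r-1 : ℕ) : ZMod r) = -1 := by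
  have h0 : ((r-1 : ℕ) : ZMod r) + ((1:ℕ) : ZMod r) = 0 := by
    rw [← Nat.cast_add, show r-1+1 = r by omega]
    exact ZMod.natCast_self r
  push_cast at h0
  linear_combination h0

include hq in
lemma jq_neg_one : jq q (-1 : ZMod q) = q := by
  unfold jq
  rw [← cast_sub_one hq, ZMod.val_natCast,
    Nat.mod_eq_of_lt (show q - 1 < q by omega)]
  omega

include hq hpq in
lemma jp_one (y : Fin (p+q) → ℤ) : Dd (jp p q (1 : ZMod p)) y = Dd (q+1) y := by
  have hp : 1 ≤ p := le_trans hq hpq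
  have hv : (1 : ZMod p).val = 1 % p := by rw [← Nat.cast_one, ZMod.val_natCast]
  unfold jp
  rw [hv]
  by_cases hp1 : p = 1
  · rw [if_pos (show 1 % p = 0 by rw [hp1])]
    exact Dd_congr (show 0 % (p+q) = (q+1) % (p+q) by
      rw [Nat.zero_mod, show q+1 = p+q by omega, Nat.mod_self]) y
  · rw [show 1 % p = 1 from Nat.mod_eq_of_lt (by omega), if_neg (by omega)]

-- ZMod wrappers
include hq hpq in
lemma KLq (x : Fin (p+q) → ℤ) (a : ZMod q) :
    Dd (jq q a) (cFun p q x) = Dd (jq q (a - 1)) x := by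
  have hk : a.val < q := ZMod.val_lt a
  have hsub : a - 1 = ((a.val + (q-1) : ℕ) : ZMod q) := by
    rw [Nat.cast_add, cast_sub_one hq, ZMod.natCast_zmod_val]
    ring
  have hval : (a - 1).val = (a.val + (q-1)) % q := by rw [hsub, ZMod.val_natCast]
  unfold jq
  rw [hval]
  by_cases h0 : a.val = 0
  · rw [h0, show (0 + (q-1)) % q = q - 1 by
        rw [Nat.zero_add]; exact Nat.mod_eq_of_lt (by omega),
      show q-1+1 = q by omega, show (0:ℕ)+1 = 1 from rfl]
    exact Lq1 hq hpq x
  · rw [show (a.val + (q-1)) % q = a.val - 1 by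
        rw [show a.val + (q-1) = (a.val - 1) + q by omega, Nat.add_mod_right]
        exact Nat.mod_eq_of_lt (by omega),
      show a.val - 1 + 1 = a.val by omega]
    exact Lq hq hpq x (by omega) (by omega)

include hq hpq in
lemma KLp (x : Fin (p+q) → ℤ) (b : ZMod p) :
    Dd (jp p q b) (cFun p q x) = Dd (jp p q (b + 1)) x := by
  have hp : 1 ≤ p := le_trans hq hpq
  have hk : b.val < p := ZMod.val_lt b
  have hval : (b + 1).val = (b.val + 1) % p := by
    rw [show b + 1 = ((b.val + 1 : ℕ) : ZMod p) by
      rw [Nat.cast_add, Nat.cast_one, ZMod.natCast_zmod_val], ZMod.val_natCast]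
  unfold jp
  rw [hval]
  by_cases h0 : b.val = 0
  · rw [h0, if_pos rfl]
    by_cases hp1 : p = 1
    · rw [if_pos (show (0+1) % p = 0 by rw [hp1]), Lp0 hq hpq x]
      exact Dd_congr (show (q+1) % (p+q) = 0 % (p+q) by
        rw [Nat.zero_mod, show q+1 = p+q by omega, Nat.mod_self]) x
    · rw [if_neg (show ¬ (0+1) % p = 0 by
          rw [Nat.mod_eq_of_lt (by omega)]; omega),
        show (0+1) % p = 1 from Nat.mod_eq_of_lt (by omega)]
      exact Lp0 hq hpq x
  · rw [if_neg h0]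
    by_cases hlast : b.val + 1 = p
    · rw [show (b.val+1) % p = 0 by rw [hlast, Nat.mod_self], if_pos rfl,
        Lp hq hpq x (j := b.val) (by omega) (by omega)]
      exact Dd_congr (show (q+b.val+1) % (p+q) = 0 % (p+q) by
        rw [Nat.zero_mod, show q+b.val+1 = p+q by omega, Nat.mod_self]) x
    · rw [show (b.val+1) % p = b.val+1 from Nat.mod_eq_of_lt (by omega),
        if_neg (by omega), show q+(b.val+1) = q+b.val+1 by omega]
      exact Lp hq hpq x (by omega) (by omega)

include hq hpq in
lemma I1q (x : Fin (p+q) → ℤ) (k : ℕ) (a : ZMod q) :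
    Dd (jq q a) ((cFun p q)^[k] x) = Dd (jq q (a - k)) x := by
  induction k generalizing a with
  | zero => simp
  | succ k ih =>
    rw [Function.iterate_succ_apply', KLq hq hpq _ a, ih (a-1),
      show a - 1 - (k : ZMod q) = a - ((k+1 : ℕ) : ZMod q) by push_cast; ring]

include hq hpq in
lemma I1p (x : Fin (p+q) → ℤ) (k : ℕ) (b : ZMod p) :
    Dd (jp p q b) ((cFun p q)^[k] x) = Dd (jp p q (b + k)) x := by
  induction k generalizing b with
  | zero => simp
  | succ k ih =>
    rw [Function.iterate_succ_apply', KLp hq hpq _ b, ih (b+1),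
      show b + 1 + (k : ZMod p) = b + ((k+1 : ℕ) : ZMod p) by push_cast; ring]

include hq hpq in
lemma I2 (x : Fin (p+q) → ℤ) (k : ℕ) :
    (cFun p q)^[k] x (idx 0)
      = x (idx 0) + ∑ j ∈ Finset.range k,
          (Dd (jp p q (1 + (j:ZMod p))) x - Dd (jq q (-1 - (j:ZMod q))) x) := by
  induction k with
  | zero => simp
  | succ k ih =>
    rw [Function.iterate_succ_apply', Phi0 hq hpq, ih, Finset.sum_range_succ]
    have e1 : Dd q ((cFun p q)^[k] x) = Dd (jq q (-1 - (k:ZMod q))) x := by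
      calc Dd q ((cFun p q)^[k] x) = Dd (jq q (-1)) ((cFun p q)^[k] x) := by
            rw [jq_neg_one (q := q) hq]
        _ = Dd (jq q (-1 - (k:ZMod q))) x := I1q hq hpq x k (-1)
    have e2 : Dd (q+1) ((cFun p q)^[k] x) = Dd (jp p q (1 + (k:ZMod p))) x := by
      calc Dd (q+1) ((cFun p q)^[k] x) = Dd (jp p q 1) ((cFun p q)^[k] x) :=
            (jp_one hq hpq _).symm
        _ = Dd (jp p q (1 + (k:ZMod p))) x := I1p hq hpq x k 1
    rw [e1, e2]
    ring


-- sums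
def zmodFinEquiv (r : ℕ) [NeZero r] : Fin r ≃ ZMod r where
  toFun i := ((i.val : ℕ) : ZMod r)
  invFun a := ⟨a.val, ZMod.val_lt a⟩
  left_inv i := by
    ext
    simp [ZMod.val_natCast, Nat.mod_eq_of_lt i.isLt]
  right_inv a := ZMod.natCast_zmod_val a

lemma sum_zmod_range {r : ℕ} [NeZero r] (F : ZMod r → ℤ) :
    ∑ b : ZMod r, F b = ∑ i ∈ Finset.range r, F (i : ZMod r) := by
  rw [← Fin.sum_univ_eq_sum_range (fun i => F (i : ZMod r)) r]
  exact (Fintype.sum_equiv (zmodFinEquiv r) (fun i => F ((i.val : ℕ) : ZMod r)) F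
    (fun i => rfl)).symm

lemma SB {r : ℕ} [NeZero r] (F : ZMod r → ℤ) (t : ℕ) :
    ∑ j ∈ Finset.range (t * r), F (j : ZMod r) = t * ∑ b : ZMod r, F b := by
  induction t with
  | zero => simp
  | succ t ih =>
    rw [show (t+1) * r = t*r + r by ring, Finset.sum_range_add, ih]
    have key : ∀ i ∈ Finset.range r, F ((t*r + i : ℕ) : ZMod r) = F ((i:ℕ) : ZMod r) := by
      intro i _
      congr 1
      push_cast [ZMod.natCast_self]
      ring
    rw [Finset.sum_congr rfl key, ← sum_zmod_range]
    push_cast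
    ring

include hq hpq in
lemma SCq (x : Fin (p+q) → ℤ) :
    ∑ a : ZMod q, Dd (jq q a) x = x (idx q) - x (idx 0) := by
  rw [sum_zmod_range (fun a => Dd (jq q a) x)]
  have key : ∀ i ∈ Finset.range q, Dd (jq q ((i:ℕ) : ZMod q)) x
      = x (idx (i+1)) - x (idx i) := by
    intro i hi
    have hi' := Finset.mem_range.mp hi
    unfold jq
    rw [ZMod.val_natCast, Nat.mod_eq_of_lt hi']
    exact Dd_apply (by omega) (by omega) x
  rw [Finset.sum_congr rfl key, Finset.sum_range_sub (fun i => x (idx i)) q]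

include hq hpq in
lemma SCp (x : Fin (p+q) → ℤ) :
    ∑ b : ZMod p, Dd (jp p q b) x = x (idx 0) - x (idx q) := by
  have hp : 1 ≤ p := le_trans hq hpq
  have e1 : ∑ b : ZMod p, Dd (jp p q (1 + b)) x = ∑ b : ZMod p, Dd (jp p q b) x :=
    Fintype.sum_equiv (Equiv.addLeft (1 : ZMod p)) _ _ (fun b => rfl)
  rw [← e1, sum_zmod_range (fun b => Dd (jp p q (1 + b)) x)]
  have key : ∀ i ∈ Finset.range p, Dd (jp p q (1 + ((i:ℕ) : ZMod p))) x
      = x (idx (q+(i+1))) - x (idx (q+i)) := by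
    intro i hi
    have hi' := Finset.mem_range.mp hi
    have hval : (1 + ((i:ℕ) : ZMod p)).val = (i+1) % p := by
      rw [show (1 : ZMod p) + ((i:ℕ):ZMod p) = (((i+1 : ℕ)) : ZMod p) by push_cast; ring,
        ZMod.val_natCast]
    unfold jp
    rw [hval]
    by_cases hlast : i+1 = p
    · rw [if_pos (show (i+1) % p = 0 by rw [hlast, Nat.mod_self])]
      unfold Dd
      rw [idx_congr (show (0:ℕ) % (p+q) = (q+(i+1)) % (p+q) by
          rw [Nat.zero_mod, show q+(i+1) = p+q by omega, Nat.mod_self]),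
        idx_congr (show (0 + (p+q-1)) % (p+q) = (q+i) % (p+q) by
          rw [show 0 + (p+q-1) = q+i by omega])]
    · rw [show (i+1) % p = i+1 from Nat.mod_eq_of_lt (by omega), if_neg (by omega)]
      exact Dd_apply (by omega) (by omega) x
  rw [Finset.sum_congr rfl key, Finset.sum_range_sub (fun i => x (idx (q+i))) p,
    congrArg x (idx_congr (show (q+p) % (p+q) = 0 % (p+q) by
      rw [show q+p = p+q by omega, Nat.mod_self, Nat.zero_mod])),
    congrArg x (idx_congr (show (q+0) % (p+q) = q % (p+q) by rw [Nat.add_zero]))]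

lemma Dd_sep {n : ℕ} [NeZero n] (hn : 2 ≤ n) {i i' : ℕ} (hi : i < n) (hi' : i' < n)
    (h : ∀ x : Fin n → ℤ, Dd i x = Dd i' x) : i = i' := by
  by_contra hne
  have e1 : i % n = i := Nat.mod_eq_of_lt hi
  have e2 : i' % n = i' := Nat.mod_eq_of_lt hi'
  have e3 : (i ≠ 0 ∧ (i + (n-1)) % n = i - 1) ∨ (i = 0 ∧ (i + (n-1)) % n = n - 1) := by
    rcases Nat.eq_zero_or_pos i with h0 | h0
    · exact Or.inr ⟨h0, by rw [h0, Nat.zero_add, Nat.mod_eq_of_lt (by omega)]⟩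
    · exact Or.inl ⟨by omega, by
        rw [show i + (n-1) = (i-1) + n by omega, Nat.add_mod_right,
          Nat.mod_eq_of_lt (by omega)]⟩
  have e4 : (i' ≠ 0 ∧ (i' + (n-1)) % n = i' - 1) ∨ (i' = 0 ∧ (i' + (n-1)) % n = n - 1) := by
    rcases Nat.eq_zero_or_pos i' with h0 | h0
    · exact Or.inr ⟨h0, by rw [h0, Nat.zero_add, Nat.mod_eq_of_lt (by omega)]⟩
    · exact Or.inl ⟨by omega, by
        rw [show i' + (n-1) = (i'-1) + n by omega, Nat.add_mod_right,
          Nat.mod_eq_of_lt (by omega)]⟩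
  have h1 := h (std (idx i))
  unfold Dd std at h1
  simp only [Fin.ext_iff, idx_val] at h1
  split_ifs at h1 <;> omega

-- coordinates-from-differences
lemma eqOf (y z : Fin (p+q) → ℤ) (h0 : y (idx 0) = z (idx 0))
    (hD : ∀ i, 1 ≤ i → i < p + q → Dd i y = Dd i z) : y = z := by
  have key : ∀ i, i < p+q → y (idx i) = z (idx i) := by
    intro i
    induction i with
    | zero => exact fun _ => h0
    | succ i ih =>
      intro hi
      have hd := hD (i+1) (by omega) hi
      rw [Dd_apply (by omega) (show i = i+1-1 by omega) y,
        Dd_apply (by omega) (show i = i+1-1 by omega) z] at hd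
      have h2 := ih (by omega)
      linarith
  funext v
  rw [← idx_self v]
  exact key v.val v.isLt

include hq hpq in
lemma sum_jp_range (x : Fin (p+q) → ℤ) (k : ℕ) (hk : p ∣ k) :
    ∑ j ∈ Finset.range k, Dd (jp p q (1 + (j:ZMod p))) x
      = ((k/p : ℕ) : ℤ) * (x (idx 0) - x (idx q)) := by
  have e0 := SB (fun b => Dd (jp p q (1 + b)) x) (k/p)
  rw [Nat.div_mul_cancel hk] at e0
  have e1 : ∑ b : ZMod p, Dd (jp p q (1 + b)) x = ∑ b : ZMod p, Dd (jp p q b) x :=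
    Fintype.sum_equiv (Equiv.addLeft (1 : ZMod p)) _ _ (fun b => rfl)
  rw [e1, SCp hq hpq x] at e0
  exact_mod_cast e0

include hq hpq in
lemma sum_jq_range (x : Fin (p+q) → ℤ) (k : ℕ) (hk : q ∣ k) :
    ∑ j ∈ Finset.range k, Dd (jq q (-1 - (j:ZMod q))) x
      = ((k/q : ℕ) : ℤ) * (x (idx q) - x (idx 0)) := by
  have e0 := SB (fun a => Dd (jq q (-1 - a)) x) (k/q)
  rw [Nat.div_mul_cancel hk] at e0
  have e1 : ∑ a : ZMod q, Dd (jq q (-1 - a)) x = ∑ a : ZMod q, Dd (jq q a) x :=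
    Fintype.sum_equiv (Equiv.subLeft (-1 : ZMod q)) _ _ (fun a => rfl)
  rw [e1, SCq hq hpq x] at e0
  exact_mod_cast e0

include hq hpq in
lemma final (x : Fin (p+q) → ℤ) :
    (cFun p q)^[Nat.lcm p q] x
      = fun v => x v - ((Nat.lcm p q/p + Nat.lcm p q/q : ℕ) : ℤ)
          * (x (idx q) - x (idx 0)) := by
  have hp : 1 ≤ p := le_trans hq hpq
  have hLp : p ∣ Nat.lcm p q := Nat.dvd_lcm_left p q
  have hLq : q ∣ Nat.lcm p q := Nat.dvd_lcm_right p q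
  apply eqOf
  · rw [I2 hq hpq x (Nat.lcm p q), Finset.sum_sub_distrib,
      sum_jp_range hq hpq x _ hLp, sum_jq_range hq hpq x _ hLq]
    show _ = x (idx 0) - ((Nat.lcm p q/p + Nat.lcm p q/q : ℕ) : ℤ)
        * (x (idx q) - x (idx 0))
    push_cast
    ring
  · intro i h1 hi
    have hRHS : Dd i (fun v => x v - ((Nat.lcm p q/p + Nat.lcm p q/q : ℕ) : ℤ)
        * (x (idx q) - x (idx 0))) = Dd i x := by
      unfold Dd; ring
    rw [hRHS]
    rcases Nat.lt_or_ge q i with h | h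
    · have hb : jp p q ((i - q : ℕ) : ZMod p) = i := by
        unfold jp
        rw [ZMod.val_natCast, Nat.mod_eq_of_lt (by omega), if_neg (by omega)]
        omega
      calc Dd i ((cFun p q)^[Nat.lcm p q] x)
          = Dd (jp p q ((i - q : ℕ) : ZMod p)) ((cFun p q)^[Nat.lcm p q] x) := by rw [hb]
        _ = Dd (jp p q (((i - q : ℕ) : ZMod p) + ((Nat.lcm p q : ℕ) : ZMod p))) x :=
            I1p hq hpq x _ _
        _ = Dd i x := by
            rw [show (((i - q : ℕ) : ZMod p) + ((Nat.lcm p q : ℕ) : ZMod p))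
                = ((i - q : ℕ) : ZMod p) by
              rw [(ZMod.natCast_eq_zero_iff _ p).mpr hLp]; ring, hb]
    · have ha : jq q ((i - 1 : ℕ) : ZMod q) = i := by
        unfold jq
        rw [ZMod.val_natCast, Nat.mod_eq_of_lt (by omega)]
        omega
      calc Dd i ((cFun p q)^[Nat.lcm p q] x)
          = Dd (jq q ((i - 1 : ℕ) : ZMod q)) ((cFun p q)^[Nat.lcm p q] x) := by rw [ha]
        _ = Dd (jq q (((i - 1 : ℕ) : ZMod q) - ((Nat.lcm p q : ℕ) : ZMod q))) x :=
            I1q hq hpq x _ _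
        _ = Dd i x := by
            rw [show (((i - 1 : ℕ) : ZMod q) - ((Nat.lcm p q : ℕ) : ZMod q))
                = ((i - 1 : ℕ) : ZMod q) by
              rw [(ZMod.natCast_eq_zero_iff _ q).mpr hLq]; ring, ha]

end Main

end Stmt10

/-- for `p ≥ q ≥ 1` and the Coxeter transformation `c` of the above quiver of
type Ã_{p,q} (the unique automorphism with `⟨x,y⟩ = −⟨y,c x⟩`), one has
`c^(lcm(p,q)) x = x − m⟨x,δ⟩δ` for all `x`, where `m = lcm(p,q)/p + lcm(p,q)/q`, which is
the additive order of the residue class of `q` in `ℤ/(p+q)ℤ`; moreover `lcm(p,q)` is the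
least positive `b` with `c^b x − x ∈ ℤδ` for all `x`. -/
theorem stmt_10 (p q : ℕ) (hq : 1 ≤ q) (hpq : q ≤ p)
    (c : (Fin (p+q) → ℤ) ≃ₗ[ℤ] (Fin (p+q) → ℤ))
    (hc : ∀ x y : Fin (p+q) → ℤ,
      eulerForm (p+q) (multAtilde p q) x y = - eulerForm (p+q) (multAtilde p q) y (c x)) :
    (∀ x : Fin (p+q) → ℤ,
      (⇑c)^[Nat.lcm p q] x
        = x - (((Nat.lcm p q / p + Nat.lcm p q / q : ℕ) : ℤ) *
            eulerForm (p+q) (multAtilde p q) x (deltaAtilde (p+q))) • deltaAtilde (p+q)) ∧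
    addOrderOf ((q : ZMod (p+q))) = Nat.lcm p q / p + Nat.lcm p q / q ∧
    IsLeast {b : ℕ | 0 < b ∧ ∀ x : Fin (p+q) → ℤ,
      ∃ t : ℤ, (⇑c)^[b] x - x = t • deltaAtilde (p+q)} (Nat.lcm p q) := by
  haveI : NeZero (p+q) := ⟨by omega⟩
  haveI : NeZero p := ⟨by omega⟩
  haveI : NeZero q := ⟨by omega⟩
  have hp : 1 ≤ p := le_trans hq hpq
  have hfc : ⇑c = Stmt10.cFun p q := Stmt10.c_eq hq hpq c hc
  have hL0 : 0 < Nat.lcm p q := Nat.lcm_pos (by omega) (by omega)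
  -- Part 1
  have part1 : ∀ x : Fin (p+q) → ℤ,
      (⇑c)^[Nat.lcm p q] x
        = x - (((Nat.lcm p q / p + Nat.lcm p q / q : ℕ) : ℤ) *
            eulerForm (p+q) (multAtilde p q) x (deltaAtilde (p+q))) • deltaAtilde (p+q) := by
    intro x
    rw [hfc, Stmt10.euler_delta hq hpq x, Stmt10.final hq hpq x]
    funext v
    simp only [Pi.sub_apply, Pi.smul_apply, deltaAtilde, smul_eq_mul, mul_one]
  refine ⟨part1, ?_, ?_, ?_⟩
  · -- Part 2 : additive order
    rw [ZMod.addOrderOf_coe q (show p+q ≠ 0 by omega)]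
    obtain ⟨p', hp'⟩ := Nat.gcd_dvd_left p q
    obtain ⟨q', hq'⟩ := Nat.gcd_dvd_right p q
    set g := Nat.gcd p q with hg
    have hg0 : 0 < g := Nat.pos_of_dvd_of_pos (Nat.gcd_dvd_right p q) (by omega)
    have hgcd : Nat.gcd (p+q) q = g := Nat.gcd_add_self_left q p
    have hLval : Nat.lcm p q = g * (p' * q') := by
      have h2 := Nat.gcd_mul_lcm p q
      have h3 : g * (g * (p' * q')) = g * Nat.lcm p q := by
        calc g * (g * (p' * q')) = (g * p') * (g * q') := by ring
          _ = p * q := by rw [← hp', ← hq']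
          _ = g * Nat.lcm p q := h2.symm
      exact (Nat.eq_of_mul_eq_mul_left hg0 h3).symm
    have e1 : Nat.lcm p q / p = q' := by
      rw [hLval, hp', show g * (p'*q') = (g*p') * q' by ring]
      exact Nat.mul_div_cancel_left q' (by omega)
    have e2 : Nat.lcm p q / q = p' := by
      rw [hLval, hq', show g * (p'*q') = (g*q') * p' by ring]
      exact Nat.mul_div_cancel_left p' (by omega)
    have e3 : (p+q) / g = p' + q' := by
      rw [show p + q = g * (p' + q') by rw [Nat.mul_add, ← hp', ← hq']]
      exact Nat.mul_div_cancel_left _ hg0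
    rw [hgcd, e1, e2, e3]
    omega
  · -- membership
    refine ⟨hL0, fun x => ?_⟩
    refine ⟨-(((Nat.lcm p q / p + Nat.lcm p q / q : ℕ) : ℤ) *
      eulerForm (p+q) (multAtilde p q) x (deltaAtilde (p+q))), ?_⟩
    rw [part1 x]
    funext v
    simp only [Pi.sub_apply, Pi.smul_apply, deltaAtilde, smul_eq_mul, mul_one]
    ring
  · -- lower bound
    intro b hb
    obtain ⟨hb0, hball⟩ := hb
    have hshift : ∀ (x : Fin (p+q) → ℤ) (i : ℕ),
        Stmt10.Dd i ((⇑c)^[b] x) = Stmt10.Dd i x := by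
      intro x i
      obtain ⟨t, ht⟩ := hball x
      have hxb : (⇑c)^[b] x = fun v => x v + t := by
        funext v
        have h2 := congrFun ht v
        simp only [Pi.sub_apply, Pi.smul_apply, deltaAtilde, smul_eq_mul, mul_one] at h2
        linarith
      rw [hxb]
      unfold Stmt10.Dd
      ring
    have hq' : q ∣ b := by
      have key : ∀ x : Fin (p+q) → ℤ,
          Stmt10.Dd (Stmt10.jq q ((0:ZMod q) - (b:ZMod q))) x = Stmt10.Dd (Stmt10.jq q 0) x := by
        intro x
        have h1 := Stmt10.I1q hq hpq x b 0
        rw [← hfc, hshift x] at h1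
        exact h1.symm
      have hsep := Stmt10.Dd_sep (n := p+q) (by omega)
        (show Stmt10.jq q ((0:ZMod q) - (b:ZMod q)) < p + q by
          unfold Stmt10.jq
          have := ZMod.val_lt ((0:ZMod q) - (b:ZMod q))
          omega)
        (show Stmt10.jq q (0:ZMod q) < p + q by
          unfold Stmt10.jq
          have := ZMod.val_lt (0:ZMod q)
          omega) key
      unfold Stmt10.jq at hsep
      have hv0 : ((0:ZMod q) - (b:ZMod q)).val = 0 := by
        have h0 : (0:ZMod q).val = 0 := ZMod.val_zero
        omega
      have : (0:ZMod q) - (b:ZMod q) = 0 := (ZMod.val_eq_zero _).mp hv0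
      have hb' : (b : ZMod q) = 0 := by linear_combination -this
      exact (ZMod.natCast_eq_zero_iff b q).mp hb'
    have hp'' : p ∣ b := by
      have key : ∀ x : Fin (p+q) → ℤ,
          Stmt10.Dd (Stmt10.jp p q ((0:ZMod p) + (b:ZMod p))) x = Stmt10.Dd (Stmt10.jp p q 0) x := by
        intro x
        have h1 := Stmt10.I1p hq hpq x b 0
        rw [← hfc, hshift x] at h1
        exact h1.symm
      have hjpb : Stmt10.jp p q ((0:ZMod p) + (b:ZMod p)) < p + q := by
        unfold Stmt10.jp
        have := ZMod.val_lt ((0:ZMod p) + (b:ZMod p))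
        split_ifs <;> omega
      have hjp0 : Stmt10.jp p q (0:ZMod p) < p + q := by
        unfold Stmt10.jp
        have := ZMod.val_lt (0:ZMod p)
        split_ifs <;> omega
      have hsep := Stmt10.Dd_sep (n := p+q) (by omega) hjpb hjp0 key
      unfold Stmt10.jp at hsep
      rw [if_pos (show (0:ZMod p).val = 0 from ZMod.val_zero)] at hsep
      have hv0 : ((0:ZMod p) + (b:ZMod p)).val = 0 := by
        by_cases h : ((0:ZMod p) + (b:ZMod p)).val = 0
        · exact h
        · rw [if_neg h] at hsep; omega
      have : (0:ZMod p) + (b:ZMod p) = 0 := (ZMod.val_eq_zero _).mp hv0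
      have hb' : (b : ZMod p) = 0 := by linear_combination this
      exact (ZMod.natCast_eq_zero_iff b p).mp hb'
    exact Nat.le_of_dvd hb0 (Nat.lcm_dvd hp'' hq')
end

section
/- Let p ≥ q ≥ 1 and let Q be the quiver of type Ã_{p,q} with vertex set {0,1,…,p+q−1} and arrows i→i−1 for 1 ≤ i ≤ q, i→i+1 for q ≤ i ≤ p+q−2, and (p+q−1)→0. Let δ = (1,…,1) ∈ ℤ^{p+q}, let c be the Coxeter transformation of Q, and define v_i = α_i + α_{i+1} + ⋯ + α_q for 1 ≤ i ≤ q, v_i = α_q + α_{q+1} + ⋯ + α_i for q ≤ i ≤ p+q−1, and v_0 = δ + α_q (these are the dimension vectors of the indecomposable projective modules). Then: (i) for every i with 0 ≤ i < q one has c^{q−i}(v_i) = v_{p+i} − δ; (ii) for every i with q < i ≤ p+q−1 one has c^{min(i−q, q)}(v_i) = v_{i−q} − δ. -/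
/-- The dimension vectors of the indecomposable projectives of Ã_{p,q} :
`v_i = α_i + ⋯ + α_q` for `1 ≤ i ≤ q`, `v_i = α_q + α_{q+1} + ⋯ + α_i` for
`q ≤ i ≤ p+q−1`, and `v_0 = δ + α_q`. -/
def projAtilde (p q : ℕ) (i : ℕ) : Fin (p+q) → ℤ := fun w =>
  if i = 0 then (if w.val = q then 2 else 1)
  else if i ≤ q then (if i ≤ w.val ∧ w.val ≤ q then 1 else 0)
  else (if q ≤ w.val ∧ w.val ≤ i then 1 else 0)

def Rfun (p q : ℕ) (f : ℕ → ℤ) (w : ℕ) : ℤ :=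
  f w - ((if 1 ≤ w ∧ w ≤ q then f (w-1) else 0)
       + (if q ≤ w ∧ w ≤ p+q-2 then f (w+1) else 0)
       + (if w = p+q-1 then f 0 else 0))

def Lfun (p q : ℕ) (g : ℕ → ℤ) (w : ℕ) : ℤ :=
  g w - ((if w+1 ≤ q then g (w+1) else 0)
       + (if q+1 ≤ w then g (w-1) else 0)
       + (if w = 0 then g (p+q-1) else 0))

lemma mult_sum_right (p q : ℕ) (hq : 1 ≤ q) (hpq : q ≤ p) (f : ℕ → ℤ) (w : ℕ) (hw : w < p+q) :
    ∑ t : Fin (p+q), (multAtilde p q ⟨w, hw⟩ t : ℤ) * f t.val =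
      (if 1 ≤ w ∧ w ≤ q then f (w-1) else 0)
    + (if q ≤ w ∧ w ≤ p+q-2 then f (w+1) else 0)
    + (if w = p+q-1 then f 0 else 0) := by
  unfold multAtilde
  push_cast
  simp only [add_mul]
  rw [Finset.sum_add_distrib, Finset.sum_add_distrib]
  congr 1
  congr 1
  · by_cases h : 1 ≤ w ∧ w ≤ q
    · rw [if_pos h, Finset.sum_eq_single (⟨w-1, by omega⟩ : Fin (p+q))]
      · show (if 1 ≤ w ∧ w ≤ q ∧ (w-1) + 1 = w then (1:ℤ) else 0) * f (w-1) = f (w-1)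
        rw [if_pos ⟨h.1, h.2, by omega⟩, one_mul]
      · intro t _ ht
        rw [if_neg, zero_mul]
        rintro ⟨_, _, h3⟩
        exact ht (Fin.ext (show t.val = w - 1 by omega))
      · intro h'; exact absurd (Finset.mem_univ _) h'
    · rw [if_neg h, Finset.sum_eq_zero]
      intro t _
      rw [if_neg, zero_mul]
      tauto
  · by_cases h : q ≤ w ∧ w ≤ p+q-2
    · rw [if_pos h, Finset.sum_eq_single (⟨w+1, by omega⟩ : Fin (p+q))]
      · show (if q ≤ w ∧ w ≤ p+q-2 ∧ w + 1 = w + 1 then (1:ℤ) else 0) * f (w+1) = f (w+1)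
        rw [if_pos ⟨h.1, h.2, rfl⟩, one_mul]
      · intro t _ ht
        rw [if_neg, zero_mul]
        rintro ⟨_, _, h3⟩
        exact ht (Fin.ext (show t.val = w + 1 by omega))
      · intro h'; exact absurd (Finset.mem_univ _) h'
    · rw [if_neg h, Finset.sum_eq_zero]
      intro t _
      rw [if_neg, zero_mul]
      tauto
  · by_cases h : w = p+q-1
    · rw [if_pos h, Finset.sum_eq_single (⟨0, by omega⟩ : Fin (p+q))]
      · show (if w = p+q-1 ∧ (0:ℕ) = 0 then (1:ℤ) else 0) * f 0 = f 0
        rw [if_pos ⟨h, rfl⟩, one_mul]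
      · intro t _ ht
        rw [if_neg, zero_mul]
        rintro ⟨_, h3⟩
        exact ht (Fin.ext (show t.val = 0 by omega))
      · intro h'; exact absurd (Finset.mem_univ _) h'
    · rw [if_neg h, Finset.sum_eq_zero]
      intro t _
      rw [if_neg, zero_mul]
      tauto

lemma mult_sum_left (p q : ℕ) (hq : 1 ≤ q) (hpq : q ≤ p) (g : ℕ → ℤ) (w : ℕ) (hw : w < p+q) :
    ∑ s : Fin (p+q), (multAtilde p q s ⟨w, hw⟩ : ℤ) * g s.val =
      (if w+1 ≤ q then g (w+1) else 0)
    + (if q+1 ≤ w then g (w-1) else 0)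
    + (if w = 0 then g (p+q-1) else 0) := by
  unfold multAtilde
  push_cast
  simp only [add_mul]
  rw [Finset.sum_add_distrib, Finset.sum_add_distrib]
  congr 1
  congr 1
  · by_cases h : w+1 ≤ q
    · rw [if_pos h, Finset.sum_eq_single (⟨w+1, by omega⟩ : Fin (p+q))]
      · show (if 1 ≤ w+1 ∧ w+1 ≤ q ∧ w + 1 = w+1 then (1:ℤ) else 0) * g (w+1) = g (w+1)
        rw [if_pos ⟨by omega, h, rfl⟩, one_mul]
      · intro s _ hs
        rw [if_neg, zero_mul]
        rintro ⟨_, _, h3⟩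
        exact hs (Fin.ext (show s.val = w + 1 by omega))
      · intro h'; exact absurd (Finset.mem_univ _) h'
    · rw [if_neg h, Finset.sum_eq_zero]
      intro s _
      rw [if_neg, zero_mul]
      rintro ⟨h1, h2, h3⟩
      omega
  · by_cases h : q+1 ≤ w
    · rw [if_pos h, Finset.sum_eq_single (⟨w-1, by omega⟩ : Fin (p+q))]
      · show (if q ≤ w-1 ∧ w-1 ≤ p+q-2 ∧ w = (w-1) + 1 then (1:ℤ) else 0) * g (w-1) = g (w-1)
        rw [if_pos ⟨by omega, by omega, by omega⟩, one_mul]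
      · intro s _ hs
        rw [if_neg, zero_mul]
        rintro ⟨_, _, h3⟩
        exact hs (Fin.ext (show s.val = w - 1 by omega))
      · intro h'; exact absurd (Finset.mem_univ _) h'
    · rw [if_neg h, Finset.sum_eq_zero]
      intro s _
      rw [if_neg, zero_mul]
      rintro ⟨h1, h2, h3⟩
      omega
  · by_cases h : w = 0
    · rw [if_pos h, Finset.sum_eq_single (⟨p+q-1, by omega⟩ : Fin (p+q))]
      · show (if p+q-1 = p+q-1 ∧ w = 0 then (1:ℤ) else 0) * g (p+q-1) = g (p+q-1)
        rw [if_pos ⟨rfl, h⟩, one_mul]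
      · intro s _ hs
        rw [if_neg, zero_mul]
        rintro ⟨h3, _⟩
        exact hs (Fin.ext (show s.val = p+q-1 by omega))
      · intro h'; exact absurd (Finset.mem_univ _) h'
    · rw [if_neg h, Finset.sum_eq_zero]
      intro s _
      rw [if_neg, zero_mul]
      rintro ⟨_, h3⟩
      omega

lemma euler_right (p q : ℕ) (hq : 1 ≤ q) (hpq : q ≤ p) (f : ℕ → ℤ) (w : ℕ) (hw : w < p+q) :
    eulerForm (p+q) (multAtilde p q) (fun v => f v.val) (fun v => if v.val = w then 1 else 0)
      = Rfun p q f w := by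
  unfold eulerForm Rfun
  congr 1
  · rw [Finset.sum_eq_single (⟨w, hw⟩ : Fin (p+q))]
    · show f w * (if w = w then (1:ℤ) else 0) = f w
      rw [if_pos rfl, mul_one]
    · intro v _ hv
      show f v.val * (if v.val = w then (1:ℤ) else 0) = 0
      rw [if_neg (fun h => hv (Fin.ext h)), mul_zero]
    · intro h'; exact absurd (Finset.mem_univ _) h'
  · rw [Finset.sum_eq_single (⟨w, hw⟩ : Fin (p+q))]
    · rw [← mult_sum_right p q hq hpq f w hw]
      apply Finset.sum_congr rfl
      intro t _
      show (multAtilde p q ⟨w, hw⟩ t : ℤ) * (f t.val * (if w = w then (1:ℤ) else 0))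
            = (multAtilde p q ⟨w, hw⟩ t : ℤ) * f t.val
      rw [if_pos rfl, mul_one]
    · intro s _ hs
      apply Finset.sum_eq_zero
      intro t _
      show (multAtilde p q s t : ℤ) * (f t.val * (if s.val = w then (1:ℤ) else 0)) = 0
      rw [if_neg (fun h => hs (Fin.ext h)), mul_zero, mul_zero]
    · intro h'; exact absurd (Finset.mem_univ _) h'

lemma euler_left (p q : ℕ) (hq : 1 ≤ q) (hpq : q ≤ p) (g : ℕ → ℤ) (w : ℕ) (hw : w < p+q) :
    eulerForm (p+q) (multAtilde p q) (fun v => if v.val = w then 1 else 0) (fun v => g v.val)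
      = Lfun p q g w := by
  unfold eulerForm Lfun
  congr 1
  · rw [Finset.sum_eq_single (⟨w, hw⟩ : Fin (p+q))]
    · show (if w = w then (1:ℤ) else 0) * g w = g w
      rw [if_pos rfl, one_mul]
    · intro v _ hv
      show (if v.val = w then (1:ℤ) else 0) * g v.val = 0
      rw [if_neg (fun h => hv (Fin.ext h)), zero_mul]
    · intro h'; exact absurd (Finset.mem_univ _) h'
  · rw [← mult_sum_left p q hq hpq g w hw]
    apply Finset.sum_congr rfl
    intro s _
    rw [Finset.sum_eq_single (⟨w, hw⟩ : Fin (p+q))]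
    · show (multAtilde p q s ⟨w, hw⟩ : ℤ) * ((if w = w then (1:ℤ) else 0) * g s.val)
          = (multAtilde p q s ⟨w, hw⟩ : ℤ) * g s.val
      rw [if_pos rfl, one_mul]
    · intro t _ ht
      show (multAtilde p q s t : ℤ) * ((if t.val = w then (1:ℤ) else 0) * g s.val) = 0
      rw [if_neg (fun h => ht (Fin.ext h)), zero_mul, mul_zero]
    · intro h'; exact absurd (Finset.mem_univ _) h'

lemma Lfun_sub (p q : ℕ) (g1 g2 : ℕ → ℤ) (w : ℕ) :
    Lfun p q (fun j => g1 j - g2 j) w = Lfun p q g1 w - Lfun p q g2 w := by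
  unfold Lfun
  split_ifs <;> ring

lemma nondeg (p q : ℕ) (hq : 1 ≤ q) (hpq : q ≤ p) (d : ℕ → ℤ)
    (h : ∀ w, w < p+q → Lfun p q d w = 0) : ∀ j, j < p+q → d j = 0 := by
  have hdq : d q = 0 := by
    have := h q (by omega)
    unfold Lfun at this
    rw [if_neg (by omega), if_neg (by omega), if_neg (by omega)] at this
    omega
  have hup : ∀ m, q + m < p+q → d (q+m) = 0 := by
    intro m
    induction m with
    | zero => intro _; exact hdq
    | succ n ih =>
      intro hm
      show d (q+n+1) = 0
      have := h (q+n+1) (by omega)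
      unfold Lfun at this
      rw [if_neg (by omega), if_pos (by omega), if_neg (by omega)] at this
      have h2 : q + n + 1 - 1 = q + n := by omega
      rw [h2] at this
      rw [ih (by omega)] at this
      omega
  have hdown : ∀ m, m < q → d (q-m) = 0 := by
    intro m
    induction m with
    | zero => intro _; exact hdq
    | succ n ih =>
      intro hm
      show d (q-n-1) = 0
      have := h (q-n-1) (by omega)
      unfold Lfun at this
      rw [if_pos (by omega), if_neg (by omega), if_neg (by omega)] at this
      have h2 : q - n - 1 + 1 = q - n := by omega
      rw [h2] at this
      rw [ih (by omega)] at this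
      omega
  have h0 : d 0 = 0 := by
    have := h 0 (by omega)
    unfold Lfun at this
    rw [if_pos (by omega), if_neg (by omega), if_pos rfl] at this
    have h1 : d 1 = 0 := by
      have := hdown (q-1) (by omega)
      have e : q - (q-1) = 1 := by omega
      rwa [e] at this
    have h2 : d (p+q-1) = 0 := by
      have := hup (p-1) (by omega)
      have e : q + (p-1) = p+q-1 := by omega
      rwa [e] at this
    rw [h1, h2] at this
    omega
  intro j hj
  rcases Nat.eq_zero_or_pos j with h1 | h1
  · rw [h1]; exact h0
  rcases le_or_gt j q with h2 | h2
  · have := hdown (q-j) (by omega)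
    have e : q - (q-j) = j := by omega
    rwa [e] at this
  · have := hup (j-q) (by omega)
    have e : q + (j-q) = j := by omega
    rwa [e] at this

lemma cox_key (p q : ℕ) (hq : 1 ≤ q) (hpq : q ≤ p)
    (c : (Fin (p+q) → ℤ) ≃ₗ[ℤ] (Fin (p+q) → ℤ))
    (hc : ∀ x y : Fin (p+q) → ℤ,
      eulerForm (p+q) (multAtilde p q) x y = - eulerForm (p+q) (multAtilde p q) y (c x))
    (f g : ℕ → ℤ)
    (h : ∀ w, w < p+q → Rfun p q f w = - Lfun p q g w) :
    c (fun v => f v.val) = (fun v => g v.val) := by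
  set u := c (fun v => f v.val) with hu
  let g' : ℕ → ℤ := fun j => if hj : j < p+q then u ⟨j, hj⟩ else g j
  have hu' : u = fun v => g' v.val := by
    funext v
    show u v = if hj : v.val < p+q then u ⟨v.val, hj⟩ else g v.val
    rw [dif_pos v.isLt, Fin.eta]
  have hL : ∀ w, w < p+q → Lfun p q g' w = Lfun p q g w := by
    intro w hw
    have h1 := hc (fun v => f v.val) (fun v => if v.val = w then 1 else 0)
    rw [euler_right p q hq hpq f w hw, ← hu, hu'] at h1
    rw [euler_left p q hq hpq g' w hw] at h1
    have h2 := h w hw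
    omega
  have hz : ∀ j, j < p+q → g' j - g j = 0 := by
    apply nondeg p q hq hpq
    intro w hw
    rw [Lfun_sub, hL w hw]
    ring
  rw [hu']
  funext v
  have := hz v.val v.isLt
  show g' v.val = g v.val
  omega

def tf (a b j : ℕ) : ℤ := (if j ≤ a then -1 else 0) + (if b ≤ j then -1 else 0)
def pa (i q j : ℕ) : ℤ := if i ≤ j ∧ j ≤ q then 1 else 0
def pb (i q j : ℕ) : ℤ := if q ≤ j ∧ j ≤ i then 1 else 0
def pz (q j : ℕ) : ℤ := if j = q then 2 else 1

section regions
variable {p q : ℕ} (f g : ℕ → ℤ)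

lemma Rfun_0 (hq : 1 ≤ q) (hp : 1 ≤ p) : Rfun p q f 0 = f 0 := by
  unfold Rfun; rw [if_neg (by omega), if_neg (by omega), if_neg (by omega)]; ring

lemma Rfun_low (w : ℕ) (h1 : 1 ≤ w) (h2 : w < q) (hp : 1 ≤ p) : Rfun p q f w = f w - f (w-1) := by
  unfold Rfun; rw [if_pos (by omega), if_neg (by omega), if_neg (by omega)]; ring

lemma Rfun_q (hq : 1 ≤ q) (hp : 2 ≤ p) : Rfun p q f q = f q - (f (q-1) + f (q+1)) := by
  unfold Rfun; rw [if_pos (by omega), if_pos (by omega), if_neg (by omega)]; ring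

lemma Rfun_high (w : ℕ) (h1 : q < w) (h2 : w < p+q-1) : Rfun p q f w = f w - f (w+1) := by
  unfold Rfun; rw [if_neg (by omega), if_pos (by omega), if_neg (by omega)]; ring

lemma Rfun_top (hq : 1 ≤ q) (hp : 2 ≤ p) : Rfun p q f (p+q-1) = f (p+q-1) - f 0 := by
  unfold Rfun; rw [if_neg (by omega), if_neg (by omega), if_pos rfl]; ring

lemma Lfun_0 (hq : 1 ≤ q) : Lfun p q g 0 = g 0 - (g 1 + g (p+q-1)) := by
  unfold Lfun; rw [if_pos (by omega), if_neg (by omega), if_pos rfl]; ring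

lemma Lfun_low (w : ℕ) (h1 : 1 ≤ w) (h2 : w < q) : Lfun p q g w = g w - g (w+1) := by
  unfold Lfun; rw [if_pos (by omega), if_neg (by omega), if_neg (by omega)]; ring

lemma Lfun_q (hq : 1 ≤ q) : Lfun p q g q = g q := by
  unfold Lfun; rw [if_neg (by omega), if_neg (by omega), if_neg (by omega)]; ring

lemma Lfun_high (w : ℕ) (h1 : q < w) (h2 : w < p+q) (h3 : 1 ≤ w) : Lfun p q g w = g w - g (w-1) := by
  unfold Lfun; rw [if_neg (by omega), if_pos (by omega), if_neg (by omega)]; ring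

end regions

lemma key_base1a (p q : ℕ) (hq : 1 ≤ q) (hpq : q ≤ p) :
    ∀ w, w < p+q → Rfun p q (pz q) w = - Lfun p q (tf 0 (p+q)) w := by
  intro w hw
  rcases (by omega : p = 1 ∧ q = 1 ∨ 2 ≤ p) with ⟨hp, hq1⟩ | hp
  · subst hp; subst hq1
    interval_cases w
    · rw [Rfun_0 _ (by omega) (by omega), Lfun_0 _ (by omega)]
      simp only [pz, tf]
      norm_num
    · show Rfun 1 1 (pz 1) 1 = - Lfun 1 1 (tf 0 2) 1
      unfold Rfun Lfun
      rw [if_pos (by omega), if_neg (by omega), if_pos (by omega),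
          if_neg (by omega), if_neg (by omega), if_neg (by omega)]
      simp only [pz, tf]
      norm_num
  · rcases (by omega : w = 0 ∨ (1 ≤ w ∧ w < q) ∨ w = q ∨ (q < w ∧ w < p+q-1) ∨ w = p+q-1)
      with h | ⟨h1, h2⟩ | h | ⟨h1, h2⟩ | h
    · subst h
      rw [Rfun_0 _ (by omega) (by omega), Lfun_0 _ (by omega)]
      simp only [pz, tf]
      split_ifs <;> omega
    · rw [Rfun_low _ w h1 h2 (by omega), Lfun_low _ w h1 h2]
      simp only [pz, tf]
      split_ifs <;> omega
    · subst h
      rw [Rfun_q _ hq hp, Lfun_q _ hq]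
      simp only [pz, tf]
      split_ifs <;> omega
    · rw [Rfun_high _ w h1 h2, Lfun_high _ w h1 (by omega) (by omega)]
      simp only [pz, tf]
      split_ifs <;> omega
    · subst h
      rw [Rfun_top _ hq hp, Lfun_high _ (p+q-1) (by omega) (by omega) (by omega)]
      simp only [pz, tf]
      split_ifs <;> omega

lemma key_base1b (p q i : ℕ) (hq : 1 ≤ q) (hpq : q ≤ p) (h1i : 1 ≤ i) (hiq : i < q) :
    ∀ w, w < p+q → Rfun p q (pa i q) w = - Lfun p q (tf i (p+q)) w := by
  intro w hw
  have hp : 2 ≤ p := by omega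
  rcases (by omega : w = 0 ∨ (1 ≤ w ∧ w < q) ∨ w = q ∨ (q < w ∧ w < p+q-1) ∨ w = p+q-1)
    with h | ⟨h1, h2⟩ | h | ⟨h1, h2⟩ | h
  · subst h
    rw [Rfun_0 _ (by omega) (by omega), Lfun_0 _ (by omega)]
    simp only [pa, tf]
    split_ifs <;> omega
  · rw [Rfun_low _ w h1 h2 (by omega), Lfun_low _ w h1 h2]
    simp only [pa, tf]
    split_ifs <;> omega
  · subst h
    rw [Rfun_q _ hq hp, Lfun_q _ hq]
    simp only [pa, tf]
    split_ifs <;> omega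
  · rw [Rfun_high _ w h1 h2, Lfun_high _ w h1 (by omega) (by omega)]
    simp only [pa, tf]
    split_ifs <;> omega
  · subst h
    rw [Rfun_top _ hq hp, Lfun_high _ (p+q-1) (by omega) (by omega) (by omega)]
    simp only [pa, tf]
    split_ifs <;> omega

lemma key_base2 (p q i : ℕ) (hq : 1 ≤ q) (hpq : q ≤ p) (h1i : q < i) (hiq : i ≤ p+q-1) :
    ∀ w, w < p+q → Rfun p q (pb i q) w = - Lfun p q (tf 0 i) w := by
  intro w hw
  have hp : 2 ≤ p := by omega
  rcases (by omega : w = 0 ∨ (1 ≤ w ∧ w < q) ∨ w = q ∨ (q < w ∧ w < p+q-1) ∨ w = p+q-1)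
    with h | ⟨h1, h2⟩ | h | ⟨h1, h2⟩ | h
  · subst h
    rw [Rfun_0 _ (by omega) (by omega), Lfun_0 _ (by omega)]
    simp only [pb, tf]
    split_ifs <;> omega
  · rw [Rfun_low _ w h1 h2 (by omega), Lfun_low _ w h1 h2]
    simp only [pb, tf]
    split_ifs <;> omega
  · subst h
    rw [Rfun_q _ hq hp, Lfun_q _ hq]
    simp only [pb, tf]
    split_ifs <;> omega
  · rw [Rfun_high _ w h1 h2, Lfun_high _ w h1 (by omega) (by omega)]
    simp only [pb, tf]
    split_ifs <;> omega
  · subst h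
    rw [Rfun_top _ hq hp, Lfun_high _ (p+q-1) (by omega) (by omega) (by omega)]
    simp only [pb, tf]
    split_ifs <;> omega

set_option maxHeartbeats 2000000 in
lemma key_step (p q a b : ℕ) (hq : 1 ≤ q) (hpq : q ≤ p) (h1 : a+2 ≤ q) (h2 : q+2 ≤ b) (h3 : b ≤ p+q) :
    ∀ w, w < p+q → Rfun p q (tf a b) w = - Lfun p q (tf (a+1) (b-1)) w := by
  intro w hw
  have hp : 2 ≤ p := by omega
  rcases (by omega : w = 0 ∨ (1 ≤ w ∧ w < q) ∨ w = q ∨ (q < w ∧ w < p+q-1) ∨ w = p+q-1)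
    with h | ⟨h1', h2'⟩ | h | ⟨h1', h2'⟩ | h
  · subst h
    rw [Rfun_0 _ (by omega) (by omega), Lfun_0 _ (by omega)]
    simp only [tf]
    split_ifs <;> omega
  · rw [Rfun_low _ w h1' h2' (by omega), Lfun_low _ w h1' h2']
    simp only [tf]
    split_ifs <;> omega
  · subst h
    rw [Rfun_q _ hq hp, Lfun_q _ hq]
    simp only [tf]
    split_ifs <;> omega
  · rw [Rfun_high _ w h1' h2', Lfun_high _ w h1' (by omega) (by omega)]
    simp only [tf]
    split_ifs <;> omega
  · subst h
    rw [Rfun_top _ hq hp, Lfun_high _ (p+q-1) (by omega) (by omega) (by omega)]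
    simp only [tf]
    split_ifs <;> omega

/-- for `p ≥ q ≥ 1` and the Coxeter transformation `c` of the above quiver of
type Ã_{p,q}: (i) for `0 ≤ i < q` one has `c^(q−i) v_i = v_{p+i} − δ`; (ii) for
`q < i ≤ p+q−1` one has `c^(min(i−q,q)) v_i = v_{i−q} − δ`. -/
theorem stmt_13 (p q : ℕ) (hq : 1 ≤ q) (hpq : q ≤ p)
    (c : (Fin (p+q) → ℤ) ≃ₗ[ℤ] (Fin (p+q) → ℤ))
    (hc : ∀ x y : Fin (p+q) → ℤ,
      eulerForm (p+q) (multAtilde p q) x y = - eulerForm (p+q) (multAtilde p q) y (c x)) :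
    (∀ i : ℕ, i < q →
      (⇑c)^[q-i] (projAtilde p q i) = projAtilde p q (p+i) - deltaAtilde (p+q)) ∧
    (∀ i : ℕ, q < i → i ≤ p + q - 1 →
      (⇑c)^[min (i-q) q] (projAtilde p q i) = projAtilde p q (i-q) - deltaAtilde (p+q)) := by
  have hstep : ∀ a b : ℕ, a+2 ≤ q → q+2 ≤ b → b ≤ p+q →
      c (fun v => tf a b v.val) = (fun v => tf (a+1) (b-1) v.val) :=
    fun a b h1 h2 h3 => cox_key p q hq hpq c hc _ _ (key_step p q a b hq hpq h1 h2 h3)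
  constructor
  · intro i hi
    have hbase : c (projAtilde p q i) = (fun v => tf i (p+q) v.val) := by
      rcases Nat.eq_zero_or_pos i with h0 | h0
      · subst h0
        have e : projAtilde p q 0 = fun v : Fin (p+q) => pz q v.val := by
          funext v; simp [projAtilde, pz]
        rw [e]
        exact cox_key p q hq hpq c hc (pz q) (tf 0 (p+q)) (key_base1a p q hq hpq)
      · have e : projAtilde p q i = fun v : Fin (p+q) => pa i q v.val := by
          funext v; simp only [projAtilde, pa]
          rw [if_neg (by omega), if_pos (by omega)]
        rw [e]
        exact cox_key p q hq hpq c hc (pa i q) (tf i (p+q)) (key_base1b p q i hq hpq h0 hi)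
    have hiter : ∀ k, k < q - i →
        (⇑c)^[k+1] (projAtilde p q i) = fun v => tf (i+k) (p+q-k) v.val := by
      intro k
      induction k with
      | zero => intro _; simpa using hbase
      | succ n ih =>
        intro hk
        rw [Function.iterate_succ_apply', ih (by omega),
            hstep (i+n) (p+q-n) (by omega) (by omega) (by omega)]
        rfl
    have hfin := hiter (q-i-1) (by omega)
    rw [show q-i-1+1 = q-i from by omega] at hfin
    rw [hfin]
    funext v
    simp only [tf, projAtilde, deltaAtilde, Pi.sub_apply]
    split_ifs <;> omega
  · intro i hqi hile
    set m := min (i-q) q with hm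
    have hm1 : 1 ≤ m := by omega
    have hbase : c (projAtilde p q i) = (fun v => tf 0 i v.val) := by
      have e : projAtilde p q i = fun v : Fin (p+q) => pb i q v.val := by
        funext v; simp only [projAtilde, pb]
        rw [if_neg (by omega), if_neg (by omega)]
      rw [e]
      exact cox_key p q hq hpq c hc (pb i q) (tf 0 i) (key_base2 p q i hq hpq hqi hile)
    have hiter : ∀ k, k < m →
        (⇑c)^[k+1] (projAtilde p q i) = fun v => tf k (i-k) v.val := by
      intro k
      induction k with
      | zero => intro _; simpa using hbase
      | succ n ih =>
        intro hk
        rw [Function.iterate_succ_apply', ih (by omega),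
            hstep n (i-n) (by omega) (by omega) (by omega)]
        rfl
    have hfin := hiter (m-1) (by omega)
    rw [show m-1+1 = m from by omega] at hfin
    rw [hfin]
    funext v
    simp only [tf, projAtilde, deltaAtilde, Pi.sub_apply]
    split_ifs <;> omega
end
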